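/- arXiv:1206.6193 — 10 statements merged into one kernel-verified Lean document; each statement's English description precedes it below -/
import Mathlib

section
/- Let C be any sink component of dec(G). Then for each vertex v of the event graph G there exists at least one subset Y ⊆ U|V such that (v, Y) is a node of C; in other words, every vertex of G occurs as the first component of at least one node of C. -/
/-- The update to the active set when a walk on the event graph enters node `w`:
insert `elt w` if `w` is an insertion node (`ins w = true`), delete it otherwise. -/
def decStep {V U : Type*} (ins : V → Bool) (elt : V → U) (w : V) (X : Set U) : Set U :=
  if ins w = true then X ∪ {elt w} else X \ {elt w}

/-- The edge relation of the decorated graph `dec(G)`: `(u, X) → (v, Y)` iff `uv` is an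
edge of `G` and `Y` is obtained from `X` by performing the operation at `v`. -/
def decAdj {V U : Type*} (G : SimpleGraph V) (ins : V → Bool) (elt : V → U)
    (p q : V × Set U) : Prop :=
  G.Adj p.1 q.1 ∧ q.2 = decStep ins elt q.1 p.2

/-- A sink component of the relation `R`: a nonempty strongly connected set of
vertices that is closed under reachability (equivalently, a strongly connected
component with no edges leaving it). -/
def IsSinkComponent {α : Type*} (R : α → α → Prop) (C : Set α) : Prop :=
  C.Nonempty ∧
  (∀ p ∈ C, ∀ q ∈ C, Relation.ReflTransGen R p q) ∧
  (∀ p ∈ C, ∀ q, Relation.ReflTransGen R p q → q ∈ C)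

/-- The set decorating the final node of the lifting `lt(W, X)` of the walk `W`
(given as the list of its nodes) starting from the decorated node `(W.head, X)`:
the operations at all nodes of `W` after the first are applied to `X` in order. -/
def liftEndSet {V U : Type*} (ins : V → Bool) (elt : V → U) (X : Set U) (W : List V) : Set U :=
  W.tail.foldl (fun Y u => decStep ins elt u Y) X

/-- A certifying walk for the decorated node `(v, X)`: a closed walk `W` in `G`
starting and ending at `v` such that every element of the universe is referred to
by the label of some node of `W`, and an element `x` lies in `X` exactly when the
last node of `W` whose label refers to `x` is an insertion node. -/
def IsCertifyingWalk {V U : Type*} (G : SimpleGraph V) (ins : V → Bool) (elt : V → U)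
    (v : V) (X : Set U) (W : List V) : Prop :=
  W ≠ [] ∧ W.Chain' G.Adj ∧ W.head? = some v ∧ W.getLast? = some v ∧
  ∀ x : U, ∃ W₁ w W₂, W = W₁ ++ w :: W₂ ∧ elt w = x ∧
    (∀ u ∈ W₂, elt u ≠ x) ∧ (x ∈ X ↔ ins w = true)

/-- Every vertex of the event graph occurs as the first component of at least one
node of any sink component of the decorated graph. -/
theorem stmt_0 {V U : Type*} [Fintype V] [Fintype U]
    (G : SimpleGraph V) (hconn : G.Connected)
    (ins : V → Bool) (elt : V → U)
    (hIns : ∀ x : U, ∃ w : V, ins w = true ∧ elt w = x)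
    (hDel : ∀ x : U, ∃ w : V, ins w = false ∧ elt w = x)
    (C : Set (V × Set U)) (hC : IsSinkComponent (decAdj G ins elt) C)
    (v : V) :
    ∃ Y : Set U, (v, Y) ∈ C := by
  obtain ⟨⟨p, hp⟩, _, hclosed⟩ := hC
  have key : ∀ (u w : V), G.Reachable u w → ∀ X : Set U,
      ∃ Y, Relation.ReflTransGen (decAdj G ins elt) (u, X) (w, Y) := by
    intro u w ⟨W⟩
    induction W with
    | nil => exact fun X => ⟨X, Relation.ReflTransGen.refl⟩
    | cons h W ih =>
      intro X
      obtain ⟨Y, hY⟩ := ih (decStep ins elt _ X)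
      exact ⟨Y, Relation.ReflTransGen.head ⟨h, rfl⟩ hY⟩
  obtain ⟨Y, hY⟩ := key p.1 v (hconn p.1 v) p.2
  exact ⟨Y, hclosed p hp _ hY⟩
end

section
/- In dec(G) there exists a unique sink component C such that for every node of the form (v, ∅) in dec(G), C is the only sink component reachable from (v, ∅) by a directed walk in dec(G). -/
section Aux
variable {V U : Type*} {G : SimpleGraph V} (ins : V → Bool) (elt : V → U)

lemma mem_decStep (w : V) (X : Set U) (x : U) :
    x ∈ decStep ins elt w X ↔
      (if ins w = true then (x ∈ X ∨ x = elt w) else (x ∈ X ∧ x ≠ elt w)) := by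
  unfold decStep; split <;> simp [or_comm]

lemma foldl_indep (L : List V) (x : U) (h : ∃ w ∈ L, elt w = x) (X Y : Set U) :
    (x ∈ L.foldl (fun Z u => decStep ins elt u Z) X ↔
     x ∈ L.foldl (fun Z u => decStep ins elt u Z) Y) := by
  induction L using List.reverseRecOn generalizing X Y with
  | nil => simp at h
  | append_singleton L w ih =>
    rw [List.foldl_append, List.foldl_append]
    simp only [List.foldl_cons, List.foldl_nil]
    by_cases hx : x = elt w
    · rw [mem_decStep, mem_decStep]; split <;> simp [hx]
    · have hL : ∃ u ∈ L, elt u = x := by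
        rcases h with ⟨u, hu, he⟩
        rcases List.mem_append.1 hu with h' | h'
        · exact ⟨u, h', he⟩
        · simp at h'; subst h'; exact absurd he.symm hx
      rw [mem_decStep, mem_decStep]
      split <;> simp [hx, ih hL X Y]

lemma foldl_eq (L : List V) (h : ∀ x : U, ∃ w ∈ L, elt w = x) (X Y : Set U) :
    L.foldl (fun Z u => decStep ins elt u Z) X = L.foldl (fun Z u => decStep ins elt u Z) Y :=
  Set.ext fun x => foldl_indep ins elt L x (h x) X Y

lemma reach_walk {a b : V} (p : G.Walk a b) (X : Set U) :
    Relation.ReflTransGen (decAdj G ins elt) (a, X)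
      (b, p.support.tail.foldl (fun Z u => decStep ins elt u Z) X) := by
  induction p generalizing X with
  | nil => simpa using Relation.ReflTransGen.refl
  | @cons a c b h p ih =>
    rw [SimpleGraph.Walk.support_cons, List.tail_cons, p.support_eq_cons, List.foldl_cons]
    exact Relation.ReflTransGen.head ⟨h, rfl⟩ (ih _)

lemma exists_cover_walk [Fintype U] (hconn : G.Connected)
    (hIns : ∀ x : U, ∃ w : V, ins w = true ∧ elt w = x)
    (hDel : ∀ x : U, ∃ w : V, ins w = false ∧ elt w = x) (v : V) :
    ∃ W : G.Walk v v, ∀ x : U, ∃ w ∈ W.support.tail, elt w = x := by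
  suffices h : ∀ L : List U, ∃ W : G.Walk v v, ∀ x ∈ L, ∃ w ∈ W.support, w ≠ v ∧ elt w = x by
    obtain ⟨W, hW⟩ := h Finset.univ.toList
    refine ⟨W, fun x => ?_⟩
    obtain ⟨w, hw, hne, he⟩ := hW x (by simp)
    refine ⟨w, ?_, he⟩
    rw [W.support_eq_cons] at hw
    rcases List.mem_cons.1 hw with h' | h'
    · exact absurd h' hne
    · exact h'
  intro L
  induction L with
  | nil => exact ⟨.nil, by simp⟩
  | cons x xs ih =>
    obtain ⟨W, hW⟩ := ih
    obtain ⟨wi, hwi, hei⟩ := hIns x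
    obtain ⟨wd, hwd, hed⟩ := hDel x
    by_cases hv : wi = v
    · have hdv : wd ≠ v := by
        intro h; rw [hv, ← h, hwd] at hwi; simp at hwi
      refine ⟨(((hconn.preconnected v wd).some.append (hconn.preconnected wd v).some)).append W,
        fun y hy => ?_⟩
      rcases List.mem_cons.1 hy with rfl | hy
      · refine ⟨wd, ?_, hdv, hed⟩
        rw [SimpleGraph.Walk.mem_support_append_iff, SimpleGraph.Walk.mem_support_append_iff]
        exact Or.inl (Or.inl (SimpleGraph.Walk.end_mem_support _))
      · obtain ⟨w, hw, hne, he⟩ := hW y hy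
        exact ⟨w, (SimpleGraph.Walk.mem_support_append_iff _ _).2 (Or.inr hw), hne, he⟩
    · refine ⟨(((hconn.preconnected v wi).some.append (hconn.preconnected wi v).some)).append W,
        fun y hy => ?_⟩
      rcases List.mem_cons.1 hy with rfl | hy
      · refine ⟨wi, ?_, hv, hei⟩
        rw [SimpleGraph.Walk.mem_support_append_iff, SimpleGraph.Walk.mem_support_append_iff]
        exact Or.inl (Or.inl (SimpleGraph.Walk.end_mem_support _))
      · obtain ⟨w, hw, hne, he⟩ := hW y hy
        exact ⟨w, (SimpleGraph.Walk.mem_support_append_iff _ _).2 (Or.inr hw), hne, he⟩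

lemma conflu [Fintype U] (hconn : G.Connected)
    (hIns : ∀ x : U, ∃ w : V, ins w = true ∧ elt w = x)
    (hDel : ∀ x : U, ∃ w : V, ins w = false ∧ elt w = x) (p q : V × Set U) :
    ∃ r, Relation.ReflTransGen (decAdj G ins elt) p r ∧
         Relation.ReflTransGen (decAdj G ins elt) q r := by
  obtain ⟨u, X⟩ := p
  obtain ⟨v, Y⟩ := q
  set wp := (hconn.preconnected u v).some with hwp
  have h1 := reach_walk ins elt wp X
  obtain ⟨W, hW⟩ := exists_cover_walk ins elt hconn hIns hDel v
  have h2 := reach_walk ins elt W (wp.support.tail.foldl (fun Z u => decStep ins elt u Z) X)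
  have h3 := reach_walk ins elt W Y
  have heq := foldl_eq ins elt W.support.tail hW
    (wp.support.tail.foldl (fun Z u => decStep ins elt u Z) X) Y
  refine ⟨_, h1.trans ?_, h3⟩
  rw [heq] at h2
  exact h2

end Aux

lemma exists_max {α : Type*} [Finite α] (R : α → α → Prop) (p : α) :
    ∃ q, Relation.ReflTransGen R p q ∧
      ∀ r, Relation.ReflTransGen R q r → Relation.ReflTransGen R r q := by
  classical
  have := Fintype.ofFinite α
  let s : α → Finset α :=
    fun q => Finset.univ.filter (fun r => Relation.ReflTransGen R q r ∧ ¬ Relation.ReflTransGen R r q)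
  have key : ∀ n (q : α), (s q).card ≤ n → ∃ q', Relation.ReflTransGen R q q' ∧
      ∀ r, Relation.ReflTransGen R q' r → Relation.ReflTransGen R r q' := by
    intro n
    induction n with
    | zero =>
      intro q hq
      refine ⟨q, .refl, fun r hr => ?_⟩
      by_contra hn
      have hmem : r ∈ s q := by simp [s, hr, hn]
      have : (s q).card ≠ 0 := Finset.card_ne_zero_of_mem hmem
      omega
    | succ n ih =>
      intro q hq
      by_cases h : ∀ r, Relation.ReflTransGen R q r → Relation.ReflTransGen R r q
      · exact ⟨q, .refl, h⟩
      · push_neg at h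
        obtain ⟨r, hqr, hnrq⟩ := h
        have hsub : s r ⊆ s q := by
          intro z hz
          simp only [s, Finset.mem_filter, Finset.mem_univ, true_and] at hz ⊢
          exact ⟨hqr.trans hz.1, fun hzq => hz.2 (hzq.trans hqr)⟩
        have hr_mem : r ∈ s q := by simp [s, hqr, hnrq]
        have hr_not : r ∉ s r := by
          simp only [s, Finset.mem_filter, Finset.mem_univ, true_and]
          intro h'; exact h'.2 .refl
        have hcard : (s r).card < (s q).card :=
          Finset.card_lt_card ⟨hsub, fun hsup => hr_not (hsup hr_mem)⟩
        obtain ⟨q', h1, h2⟩ := ih r (by omega)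
        exact ⟨q', hqr.trans h1, h2⟩
  exact key (s p).card p le_rfl

lemma exists_sink {α : Type*} [Finite α] (R : α → α → Prop) (p : α) :
    ∃ C, IsSinkComponent R C ∧ ∃ q ∈ C, Relation.ReflTransGen R p q := by
  obtain ⟨q, hpq, hmax⟩ := exists_max R p
  refine ⟨{r | Relation.ReflTransGen R q r}, ⟨⟨q, .refl⟩, ?_, ?_⟩, q, .refl, hpq⟩
  · exact fun a ha b hb => (hmax a ha).trans hb
  · exact fun a ha b hab => ha.trans hab

lemma sink_eq {α : Type*} {R : α → α → Prop} {C C' : Set α}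
    (hC : IsSinkComponent R C) (hC' : IsSinkComponent R C') {q q' r : α}
    (hq : q ∈ C) (hq' : q' ∈ C')
    (h1 : Relation.ReflTransGen R q r) (h2 : Relation.ReflTransGen R q' r) : C = C' := by
  have hrC : r ∈ C := hC.2.2 q hq r h1
  have hrC' : r ∈ C' := hC'.2.2 q' hq' r h2
  ext c
  exact ⟨fun hc => hC'.2.2 r hrC' c (hC.2.1 r hrC c hc),
         fun hc => hC.2.2 r hrC c (hC'.2.1 r hrC' c hc)⟩


/-- There is a unique sink component `C` of `dec(G)` such that, for every node of the
form `(v, ∅)`, `C` is the only sink component reachable from `(v, ∅)`. -/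
theorem stmt_1 {V U : Type*} [Fintype V] [Fintype U]
    (G : SimpleGraph V) (hconn : G.Connected)
    (ins : V → Bool) (elt : V → U)
    (hIns : ∀ x : U, ∃ w : V, ins w = true ∧ elt w = x)
    (hDel : ∀ x : U, ∃ w : V, ins w = false ∧ elt w = x) :
    ∃! C : Set (V × Set U),
      IsSinkComponent (decAdj G ins elt) C ∧
      ∀ v : V,
        (∃ q ∈ C, Relation.ReflTransGen (decAdj G ins elt) (v, (∅ : Set U)) q) ∧
        ∀ C' : Set (V × Set U), IsSinkComponent (decAdj G ins elt) C' →
          (∃ q ∈ C', Relation.ReflTransGen (decAdj G ins elt) (v, (∅ : Set U)) q) →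
          C' = C := by
  obtain ⟨v₀⟩ := hconn.nonempty
  obtain ⟨C, hC, q0, hq0, hreach0⟩ := exists_sink (decAdj G ins elt) (v₀, (∅ : Set U))
  have uniq : ∀ C', IsSinkComponent (decAdj G ins elt) C' → C' = C := by
    intro C' hC'
    obtain ⟨q', hq'⟩ := hC'.1
    obtain ⟨r, h1, h2⟩ := conflu ins elt hconn hIns hDel q' q0
    exact sink_eq hC' hC hq' hq0 h1 h2
  refine ⟨C, ⟨hC, fun v => ⟨?_, fun C' hC' _ => uniq C' hC'⟩⟩, fun C' h => uniq C' h.1⟩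
  obtain ⟨C'', hC'', q, hq, hr⟩ := exists_sink (decAdj G ins elt) (v, (∅ : Set U))
  exact ⟨q, (uniq C'' hC'') ▸ hq, hr⟩
end

section
/- Let W be a walk in the event graph G from a vertex v to a vertex w, and let X ⊆ U|V. Then the lifting lt(W, X) ends at the node (w, Y) of dec(G), where Y is determined as follows: for each x ∈ U|V, x ∈ Y if and only if either the last node of W whose label refers to x is labeled 'i x', or no node of W after the first has a label referring to x and x ∈ X. In particular, if W and W' are two closed walks in G starting and ending at the same vertex v, then the liftings lt(W W' W, ∅) and lt(W' W' W, ∅) of the concatenated walks end at the same node of dec(G). -/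
section Aux

variable {V U : Type*} (ins : V → Bool) (elt : V → U)

theorem my_getLast?_append {α : Type*} (l₁ l₂ : List α) (h : l₂ ≠ []) :
    (l₁ ++ l₂).getLast? = l₂.getLast? := by
  rw [List.getLast?_append]
  rcases List.getLast?_isSome.mpr h |> Option.isSome_iff_exists.mp with ⟨a, ha⟩
  rw [ha]; rfl

theorem my_concat_eq {α : Type*} {L L₁ L₂ : List α} {a u : α} (h : L ++ [a] = L₁ ++ u :: L₂) :
    (L₂ = [] ∧ L = L₁ ∧ u = a) ∨ (∃ L₂', L₂ = L₂' ++ [a] ∧ L = L₁ ++ u :: L₂') := by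
  rcases L₂.eq_nil_or_concat with rfl | ⟨L₂', a', rfl⟩
  · obtain ⟨h1, h2⟩ := List.append_inj' h rfl
    exact Or.inl ⟨rfl, h1, (List.cons.injEq ..▸ h2.symm).1⟩
  · simp only [List.concat_eq_append] at h ⊢
    rw [show L₁ ++ u :: (L₂' ++ [a']) = (L₁ ++ u :: L₂') ++ [a'] by simp] at h
    obtain ⟨h1, h2⟩ := List.append_inj' h rfl
    obtain rfl : a = a' := by simpa using h2
    exact Or.inr ⟨L₂', rfl, h1⟩

/-- last-occurrence-is-insertion predicate -/
def LastIns (x : U) (L : List V) : Prop :=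
  ∃ L₁ u L₂, L = L₁ ++ u :: L₂ ∧ elt u = x ∧ ins u = true ∧ ∀ u' ∈ L₂, elt u' ≠ x

theorem mem_decStep_eq {a : V} (X : Set U) {x : U} (hx : elt a = x) :
    x ∈ decStep ins elt a X ↔ ins a = true := by
  unfold decStep
  by_cases hi : ins a = true <;> simp [hi, hx]

theorem mem_decStep_ne {a : V} (X : Set U) {x : U} (hx : elt a ≠ x) :
    x ∈ decStep ins elt a X ↔ x ∈ X := by
  unfold decStep
  by_cases hi : ins a = true <;> simp [hi, hx, Ne.symm hx]

theorem mem_fold (x : U) :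
    ∀ (L : List V) (X : Set U),
      x ∈ L.foldl (fun Y u => decStep ins elt u Y) X ↔
        (LastIns ins elt x L ∨ ((∀ u ∈ L, elt u ≠ x) ∧ x ∈ X)) := by
  intro L
  induction L using List.reverseRecOn with
  | nil => intro X; simp [LastIns]
  | append_singleton L a ih =>
    intro X
    rw [List.foldl_append, List.foldl_cons, List.foldl_nil]
    by_cases hx : elt a = x
    · rw [mem_decStep_eq ins elt _ hx]
      constructor
      · intro hi
        exact Or.inl ⟨L, a, [], rfl, hx, hi, by simp⟩
      · rintro (⟨L₁, u, L₂, heq, hu, hi, hfree⟩ | ⟨hall, _⟩)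
        · rcases my_concat_eq heq with ⟨rfl, rfl, rfl⟩ | ⟨L₂', rfl, rfl⟩
          · exact hi
          · exact absurd hx (hfree a (by simp))
        · exact absurd hx (hall a (by simp))
    · rw [mem_decStep_ne ins elt _ hx, ih]
      constructor
      · rintro (⟨L₁, u, L₂, rfl, hu, hi, hfree⟩ | ⟨hall, hX⟩)
        · refine Or.inl ⟨L₁, u, L₂ ++ [a], by simp, hu, hi, ?_⟩
          intro u' hu'
          rcases List.mem_append.mp hu' with h | h
          · exact hfree u' h
          · simpa using (List.mem_singleton.mp h) ▸ hx
        · refine Or.inr ⟨?_, hX⟩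
          intro u hu
          rcases List.mem_append.mp hu with h | h
          · exact hall u h
          · exact (List.mem_singleton.mp h) ▸ hx
      · rintro (⟨L₁, u, L₂, heq, hu, hi, hfree⟩ | ⟨hall, hX⟩)
        · rcases my_concat_eq heq with ⟨rfl, rfl, rfl⟩ | ⟨L₂', rfl, rfl⟩
          · exact absurd hu hx
          · exact Or.inl ⟨L₁, u, L₂', rfl, hu, hi, fun u' h => hfree u' (by simp [h])⟩
        · exact Or.inr ⟨fun u h => hall u (by simp [h]), hX⟩

theorem lastIns_append {x : U} (P S : List V)
    (hsub : ∀ u ∈ P, elt u = x → ∃ u' ∈ S, elt u' = x) :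
    LastIns ins elt x (P ++ S) ↔ LastIns ins elt x S := by
  constructor
  · intro h
    induction P with
    | nil => simpa using h
    | cons p P' ih =>
      obtain ⟨L₁, u, L₂, heq, hu, hi, hfree⟩ := h
      rcases L₁ with _ | ⟨p', L₁'⟩
      · simp only [List.nil_append, List.cons_append, List.cons.injEq] at heq
        obtain ⟨rfl, heq2⟩ := heq
        obtain ⟨u', hu'S, hu'x⟩ := hsub p (by simp) hu
        exact absurd hu'x (hfree u' (heq2 ▸ List.mem_append_right _ hu'S))
      · simp only [List.cons_append, List.cons.injEq] at heq
        obtain ⟨rfl, heq2⟩ := heq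
        exact ih (fun u h hx => hsub u (by simp [h]) hx) ⟨L₁', u, L₂, heq2, hu, hi, hfree⟩
  · rintro ⟨L₁, u, L₂, rfl, hu, hi, hfree⟩
    exact ⟨P ++ L₁, u, L₂, by simp, hu, hi, hfree⟩

end Aux

/-- The lifting `lt(W, X)` of a walk `W` from `v` to `w` ends at `(w, Y)` where
`x ∈ Y` iff the last node of `W` (after the first) whose label refers to `x` is an
insertion, or no node of `W` after the first refers to `x` and `x ∈ X`. In particular,
for closed walks `W, W'` at `v`, the liftings of the concatenations `W W' W` and
`W' W' W` from the empty set end at the same node of `dec(G)`. -/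
theorem stmt_2 {V U : Type*} [Fintype V] [Fintype U]
    (G : SimpleGraph V) (hconn : G.Connected)
    (ins : V → Bool) (elt : V → U)
    (hIns : ∀ x : U, ∃ w : V, ins w = true ∧ elt w = x)
    (hDel : ∀ x : U, ∃ w : V, ins w = false ∧ elt w = x) :
    (∀ (v w : V) (X : Set U) (W : List V),
      W ≠ [] → W.Chain' G.Adj → W.head? = some v → W.getLast? = some w →
      ∀ x : U,
        x ∈ liftEndSet ins elt X W ↔
          ((∃ W₁ u W₂, W.tail = W₁ ++ u :: W₂ ∧ elt u = x ∧ ins u = true ∧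
              ∀ u' ∈ W₂, elt u' ≠ x) ∨
            ((∀ u ∈ W.tail, elt u ≠ x) ∧ x ∈ X))) ∧
    (∀ (v : V) (W W' : List V),
      W ≠ [] → W.Chain' G.Adj → W.head? = some v → W.getLast? = some v →
      W' ≠ [] → W'.Chain' G.Adj → W'.head? = some v → W'.getLast? = some v →
      (W ++ W'.tail ++ W.tail).getLast? = (W' ++ W'.tail ++ W.tail).getLast? ∧
      liftEndSet ins elt ∅ (W ++ W'.tail ++ W.tail) =
        liftEndSet ins elt ∅ (W' ++ W'.tail ++ W.tail)) := by
  constructor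
  · intro v w X W _ _ _ _ x
    exact mem_fold ins elt x W.tail X
  · intro v W W' hW hWc hWh hWl hW' hW'c hW'h hW'l
    rcases W with _ | ⟨a, W₀⟩; · exact absurd rfl hW
    rcases W' with _ | ⟨a', W₀'⟩; · exact absurd rfl hW'
    obtain rfl : a = v := by simpa using hWh
    obtain rfl : a' = a := by simpa using hW'h
    simp only [List.tail_cons]
    constructor
    · by_cases hS : W₀' ++ W₀ = []
      · obtain ⟨h1, h2⟩ := List.append_eq_nil_iff.mp hS
        simp [h1, h2]
      · rw [List.append_assoc (a' :: W₀), List.append_assoc (a' :: W₀'),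
          my_getLast?_append _ _ hS, my_getLast?_append _ _ hS]
    · unfold liftEndSet
      simp only [List.cons_append, List.tail_cons]
      ext x
      rw [mem_fold, mem_fold]
      simp only [Set.mem_empty_iff_false, and_false, or_false]
      rw [List.append_assoc W₀, List.append_assoc W₀',
        lastIns_append ins elt W₀ (W₀' ++ W₀)
          (fun u hu hx => ⟨u, List.mem_append_right _ hu, hx⟩),
        lastIns_append ins elt W₀' (W₀' ++ W₀)
          (fun u hu hx => ⟨u, List.mem_append_left _ hu, hx⟩)]
end

section
/- Let C be the unique sink component of dec(G) reachable from every node of the form (v, ∅). For a vertex v of G and X ⊆ U|V, the pair (v, X) is a node of C if and only if there exists a certifying walk for (v, X), i.e., a closed walk W in G starting and ending at v such that for each x ∈ U|V at least one node of W has a label referring to x, and x ∈ X exactly when the last node of W whose label refers to x is an insertion 'i x' (and x ∉ X exactly when that last node is a deletion 'd x'). -/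
section Aux

variable {V U : Type*} {G : SimpleGraph V} {ins : V → Bool} {elt : V → U}

/-- Fold of the decorated steps along a list (the tail of a walk). -/
def lf (ins : V → Bool) (elt : V → U) (X : Set U) (L : List V) : Set U :=
  L.foldl (fun Y u => decStep ins elt u Y) X

lemma liftEndSet_eq_lf (X : Set U) (W : List V) :
    liftEndSet ins elt X W = lf ins elt X W.tail := rfl

lemma lf_append (X : Set U) (L₁ L₂ : List V) :
    lf ins elt X (L₁ ++ L₂) = lf ins elt (lf ins elt X L₁) L₂ :=
  List.foldl_append

lemma decStep_mem_of_ne {x : U} {u : V} {X : Set U} (h : elt u ≠ x) :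
    x ∈ decStep ins elt u X ↔ x ∈ X := by
  unfold decStep
  split <;> simp [Ne.symm h]

lemma decStep_mem_of_eq {x : U} {u : V} {X : Set U} (h : elt u = x) :
    x ∈ decStep ins elt u X ↔ ins u = true := by
  unfold decStep
  rcases hu : ins u with _ | _ <;> simp [hu, h]

lemma lf_mem_of_not_ref {x : U} : ∀ {L : List V}, (∀ u ∈ L, elt u ≠ x) → ∀ X : Set U,
    (x ∈ lf ins elt X L ↔ x ∈ X) := by
  intro L
  induction L with
  | nil => intro _ X; rfl
  | cons a L ih =>
    intro h X
    have h1 : elt a ≠ x := h a (by simp)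
    have := ih (fun u hu => h u (by simp [hu])) (decStep ins elt a X)
    simp only [lf, List.foldl_cons] at *
    rw [this, decStep_mem_of_ne h1]

lemma lf_mem_last {x : U} {w : V} {L₁ L₂ : List V} (hw : elt w = x)
    (h2 : ∀ u ∈ L₂, elt u ≠ x) (X : Set U) :
    (x ∈ lf ins elt X (L₁ ++ w :: L₂) ↔ ins w = true) := by
  have : L₁ ++ w :: L₂ = (L₁ ++ [w]) ++ L₂ := by simp
  rw [this, lf_append, lf_mem_of_not_ref h2, lf_append]
  exact decStep_mem_of_eq hw

lemma exists_last_occ {x : U} : ∀ {L : List V}, (∃ u ∈ L, elt u = x) →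
    ∃ L₁ w L₂, L = L₁ ++ w :: L₂ ∧ elt w = x ∧ ∀ u ∈ L₂, elt u ≠ x := by
  intro L
  induction L with
  | nil => rintro ⟨u, hu, -⟩; simp at hu
  | cons a L ih =>
    intro h
    by_cases hL : ∃ u ∈ L, elt u = x
    · obtain ⟨L₁, w, L₂, h1, h2, h3⟩ := ih hL
      exact ⟨a :: L₁, w, L₂, by simp [h1], h2, h3⟩
    · have ha : elt a = x := by
        obtain ⟨u, hu, hux⟩ := h
        rcases List.mem_cons.mp hu with rfl | hu'
        · exact hux
        · exact absurd ⟨u, hu', hux⟩ hL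
      push_neg at hL
      exact ⟨[], a, L, by simp, ha, hL⟩

/-- Lifting a walk in `G` gives reachability in the decorated graph. -/
lemma reach_of_walk (G : SimpleGraph V) (ins : V → Bool) (elt : V → U) :
    ∀ (t : List V) (a b : V) (X : Set U), (a :: t).Chain' G.Adj →
    (a :: t).getLast? = some b →
    Relation.ReflTransGen (decAdj G ins elt) (a, X) (b, lf ins elt X t) := by
  intro t
  induction t with
  | nil =>
    intro a b X _ hlast
    simp only [List.getLast?_singleton, Option.some.injEq] at hlast
    subst hlast
    exact Relation.ReflTransGen.refl
  | cons c t ih =>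
    intro a b X hch hlast
    have hadj : G.Adj a c := (List.isChain_cons_cons.mp hch).1
    have hch' : (c :: t).Chain' G.Adj := (List.isChain_cons_cons.mp hch).2
    have hlast' : (c :: t).getLast? = some b := by
      rwa [List.getLast?_cons_cons] at hlast
    have step : decAdj G ins elt (a, X) (c, decStep ins elt c X) := ⟨hadj, rfl⟩
    have := ih c b (decStep ins elt c X) hch' hlast'
    exact Relation.ReflTransGen.head step this

/-- From reachability in the decorated graph extract a walk in `G`. -/
lemma walk_of_reach {G : SimpleGraph V} {ins : V → Bool} {elt : V → U}
    {p q : V × Set U} (h : Relation.ReflTransGen (decAdj G ins elt) p q) :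
    ∃ t : List V, (p.1 :: t).Chain' G.Adj ∧ (p.1 :: t).getLast? = some q.1 ∧
      lf ins elt p.2 t = q.2 := by
  induction h with
  | refl => exact ⟨[], List.isChain_singleton _, by simp, rfl⟩
  | tail hpr hrq ih =>
    rename_i r s
    obtain ⟨t, hch, hlast, hlf⟩ := ih
    refine ⟨t ++ [s.1], ?_, ?_, ?_⟩
    · have : p.1 :: (t ++ [s.1]) = (p.1 :: t) ++ [s.1] := by simp
      rw [this]
      refine hch.append (by simp) ?_
      intro x hx y hy
      simp only [List.head?_cons, Option.mem_def, Option.some.injEq] at hy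
      rw [hlast] at hx
      simp only [Option.mem_def, Option.some.injEq] at hx
      subst hx; subst hy
      exact hrq.1
    · have : p.1 :: (t ++ [s.1]) = (p.1 :: t) ++ [s.1] := by simp
      rw [this, List.getLast?_append_of_ne_nil _ (by simp)]
      simp
    · rw [lf_append, hlf]
      simp only [lf, List.foldl_cons, List.foldl_nil]
      exact hrq.2.symm

/-- In a connected graph there is a closed walk at `v` visiting every vertex. -/
lemma exists_tour [Fintype V] (hconn : G.Connected) (v : V) :
    ∃ T : G.Walk v v, ∀ u : V, u ∈ T.support := by
  classical
  have key : ∀ s : Finset V, ∃ T : G.Walk v v, ∀ u ∈ s, u ∈ T.support := by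
    intro s
    induction s using Finset.induction_on with
    | empty => exact ⟨.nil, by simp⟩
    | @insert a s' ha ih =>
      obtain ⟨T, hT⟩ := ih
      obtain ⟨P⟩ := hconn.preconnected v a
      refine ⟨(P.append P.reverse).append T, ?_⟩
      intro u hu
      rcases Finset.mem_insert.mp hu with rfl | hu'
      · rw [SimpleGraph.Walk.mem_support_append_iff]
        left
        rw [SimpleGraph.Walk.mem_support_append_iff]
        left
        exact P.end_mem_support
      · rw [SimpleGraph.Walk.mem_support_append_iff]
        right
        exact hT u hu'
  obtain ⟨T, hT⟩ := key Finset.univ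
  exact ⟨T, fun u => hT u (Finset.mem_univ u)⟩

end Aux

/-- A node `(v, X)` belongs to the unique sink component `C` of `dec(G)` (the one
reachable from every node of the form `(w, ∅)`) iff it admits a certifying walk. -/
theorem stmt_3 {V U : Type*} [Fintype V] [Fintype U]
    (G : SimpleGraph V) (hconn : G.Connected)
    (ins : V → Bool) (elt : V → U)
    (hIns : ∀ x : U, ∃ w : V, ins w = true ∧ elt w = x)
    (hDel : ∀ x : U, ∃ w : V, ins w = false ∧ elt w = x)
    (C : Set (V × Set U)) (hC : IsSinkComponent (decAdj G ins elt) C)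
    (hreach : ∀ w : V, ∃ q ∈ C, Relation.ReflTransGen (decAdj G ins elt) (w, (∅ : Set U)) q)
    (v : V) (X : Set U) :
    (v, X) ∈ C ↔ ∃ W : List V, IsCertifyingWalk G ins elt v X W := by
  obtain ⟨-, hscc, hclosed⟩ := hC
  constructor
  · -- forward: membership in C gives a certifying walk
    intro hvX
    obtain ⟨T, hT⟩ := exists_tour hconn v
    set A := T.support.tail with hA
    have hsupp : T.support = v :: A := T.support_eq_cons
    have hchA : (v :: A).Chain' G.Adj := by rw [← hsupp]; exact T.isChain_adj_support
    have hlastA : (v :: A).getLast? = some v := by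
      rw [← hsupp, List.getLast?_eq_getLast_of_ne_nil T.support_ne_nil]
      simp
    -- go around the tour from (v, X)
    set Y := lf ins elt X A with hY
    have h1 : Relation.ReflTransGen (decAdj G ins elt) (v, X) (v, Y) :=
      reach_of_walk G ins elt A v v X hchA hlastA
    have hvY : (v, Y) ∈ C := hclosed _ hvX _ h1
    -- come back from (v, Y) to (v, X) inside C
    have h2 : Relation.ReflTransGen (decAdj G ins elt) (v, Y) (v, X) :=
      hscc _ hvY _ hvX
    obtain ⟨t₁, hch₁, hlast₁, hlf₁⟩ := walk_of_reach h2
    replace hch₁ : (v :: t₁).Chain' G.Adj := hch₁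
    replace hlast₁ : (v :: t₁).getLast? = some v := hlast₁
    replace hlf₁ : lf ins elt Y t₁ = X := hlf₁
    have hlastFull : (v :: (A ++ t₁)).getLast? = some v := by
      cases ht₁ : t₁ with
      | nil => simpa using hlastA
      | cons c r =>
        show ((v :: A) ++ c :: r).getLast? = some v
        rw [List.getLast?_append_of_ne_nil _ (by simp)]
        rw [ht₁, List.getLast?_cons_cons] at hlast₁
        exact hlast₁
    refine ⟨v :: (A ++ t₁), by simp, ?_, by simp, hlastFull, ?_⟩
    · show ((v :: A) ++ t₁).Chain' G.Adj
      refine hchA.append ((List.isChain_cons.mp hch₁).2) ?_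
      intro x hx y hy
      rw [hlastA] at hx
      simp only [Option.mem_def, Option.some.injEq] at hx
      subst hx
      cases t₁ with
      | nil => simp at hy
      | cons c r =>
        simp only [List.head?_cons, Option.mem_def, Option.some.injEq] at hy
        subst hy
        exact (List.isChain_cons_cons.mp hch₁).1
    · -- the certification property
      have hend : lf ins elt X (A ++ t₁) = X := by
        rw [lf_append, ← hY, hlf₁]
      intro x
      obtain ⟨wi, hwi, hwix⟩ := hIns x
      have hmem : ∃ u ∈ v :: (A ++ t₁), elt u = x := by
        refine ⟨wi, ?_, hwix⟩
        have hwiA : wi ∈ v :: A := by rw [← hsupp]; exact hT wi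
        rcases List.mem_cons.mp hwiA with rfl | h
        · simp
        · simp [h]
      obtain ⟨W₁, w, W₂, heq, hw, hW₂⟩ := exists_last_occ hmem
      refine ⟨W₁, w, W₂, heq, hw, hW₂, ?_⟩
      cases W₁ with
      | nil =>
        -- the last occurrence is the head
        simp only [List.nil_append, List.cons.injEq] at heq
        obtain ⟨rfl, heq2⟩ := heq
        cases hW2e : W₂ with
        | nil =>
          -- then the whole walk is [w], so V = {w}; hIns/hDel contradict
          exfalso
          rw [hW2e] at heq2
          have hAnil : A = [] := by
            cases hA2 : A with
            | nil => rfl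
            | cons a r => rw [hA2] at heq2; simp at heq2
          have hall : ∀ u : V, u = v := by
            intro u
            have hu := hT u
            rw [hsupp, hAnil] at hu
            simpa using hu
          obtain ⟨wd, hwd, hwdx⟩ := hDel x
          rw [hall wi] at hwi
          rw [hall wd] at hwd
          rw [hwi] at hwd
          simp at hwd
        | cons c r =>
          -- then v occurs again at the end, inside W₂ : contradiction
          exfalso
          have hlast2 : (v :: W₂).getLast? = some v := by
            rw [← heq2]
            exact hlastFull
          have hvW : v ∈ W₂ := by
            rw [hW2e] at hlast2 ⊢
            rw [List.getLast?_cons_cons] at hlast2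
            exact List.mem_of_getLast? hlast2
          exact hW₂ v hvW hw
      | cons d W₁' =>
        obtain ⟨-, htail⟩ : v = d ∧ A ++ t₁ = W₁' ++ w :: W₂ := by
          simpa using heq
        rw [← hend, htail]
        exact lf_mem_last hw hW₂ X
  · -- backward: a certifying walk gives membership in C
    rintro ⟨W, hne, hch, hhead, hlast, hcert⟩
    -- W = v :: t
    obtain ⟨t, rfl⟩ : ∃ t, W = v :: t := by
      cases W with
      | nil => simp at hhead
      | cons a t =>
        simp only [List.head?_cons, Option.some.injEq] at hhead
        exact ⟨t, by rw [hhead]⟩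
    -- get a point of C sitting over v
    obtain ⟨q, hqC, -⟩ := hreach v
    obtain ⟨P⟩ := hconn.preconnected q.1 v
    set Z := lf ins elt q.2 P.support.tail with hZ
    have hq2 : Relation.ReflTransGen (decAdj G ins elt) q (v, Z) := by
      have hchP : (q.1 :: P.support.tail).Chain' G.Adj := by
        rw [← P.support_eq_cons]; exact P.isChain_adj_support
      have hlastP : (q.1 :: P.support.tail).getLast? = some v := by
        rw [← P.support_eq_cons, List.getLast?_eq_getLast_of_ne_nil P.support_ne_nil]
        simp
      have := reach_of_walk G ins elt P.support.tail q.1 v q.2 hchP hlastP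
      simpa using this
    have hvZ : (v, Z) ∈ C := hclosed _ hqC _ hq2
    -- it suffices to find a closed walk at v whose lift carries Z to X
    suffices h : ∃ t₂ : List V, (v :: t₂).Chain' G.Adj ∧ (v :: t₂).getLast? = some v ∧
        lf ins elt Z t₂ = X by
      obtain ⟨t₂, h1, h2, h3⟩ := h
      have := reach_of_walk G ins elt t₂ v v Z h1 h2
      rw [h3] at this
      exact hclosed _ hvZ _ this
    cases ht : t with
    | nil =>
      -- the certifying walk is [v]
      by_cases hU : Nonempty U
      · -- every element of U equals elt v, and x ∈ X ↔ ins v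
        have hall : ∀ x : U, elt v = x ∧ (x ∈ X ↔ ins v = true) := by
          intro x
          obtain ⟨W₁, w, W₂, heq, hw, hW₂, hiff⟩ := hcert x
          rw [ht] at heq
          cases W₁ with
          | nil =>
            simp only [List.nil_append, List.cons.injEq] at heq
            obtain ⟨rfl, -⟩ := heq
            exact ⟨hw, hiff⟩
          | cons d W₁' =>
            exfalso
            simp only [List.cons_append, List.cons.injEq] at heq
            obtain ⟨-, heq2⟩ := heq
            exact absurd heq2.symm (by simp)
        -- find a neighbour of v
        obtain ⟨b, hadj⟩ : ∃ b, G.Adj v b := by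
          by_cases hV : ∀ u : V, u = v
          · exfalso
            obtain ⟨x⟩ := hU
            obtain ⟨wi, hwi, -⟩ := hIns x
            obtain ⟨wd, hwd, -⟩ := hDel x
            rw [hV wi] at hwi
            rw [hV wd] at hwd
            rw [hwi] at hwd
            simp at hwd
          · push_neg at hV
            obtain ⟨u, hu⟩ := hV
            obtain ⟨Q⟩ := hconn.preconnected v u
            cases Q with
            | nil => exact absurd rfl hu
            | cons h q => exact ⟨_, h⟩
        refine ⟨[b, v], ?_, by simp, ?_⟩
        · exact List.isChain_cons_cons.mpr ⟨hadj, List.isChain_cons_cons.mpr ⟨hadj.symm, List.isChain_singleton v⟩⟩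
        · ext x
          obtain ⟨hx1, hx2⟩ := hall x
          have : lf ins elt Z [b, v] = decStep ins elt v (decStep ins elt b Z) := rfl
          rw [this, decStep_mem_of_eq hx1, hx2]
      · -- U is empty: all subsets of U coincide
        refine ⟨[], List.isChain_singleton _, by simp, ?_⟩
        ext x
        exact absurd ⟨x⟩ hU
    | cons c t' =>
      -- lift the certifying walk itself from (v, Z)
      refine ⟨t, hch, hlast, ?_⟩
      ext x
      obtain ⟨W₁, w, W₂, heq, hw, hW₂, hiff⟩ := hcert x
      cases W₁ with
      | nil =>
        exfalso
        simp only [List.nil_append, List.cons.injEq] at heq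
        obtain ⟨rfl, heq2⟩ := heq
        have hlast2 : (v :: t).getLast? = some v := hlast
        rw [ht, List.getLast?_cons_cons] at hlast2
        have hwmem : v ∈ c :: t' := List.mem_of_getLast? hlast2
        rw [← heq2, ht] at hW₂
        exact hW₂ v hwmem hw
      | cons d W₁' =>
        obtain ⟨-, htail⟩ : v = d ∧ t = W₁' ++ w :: W₂ := by simpa using heq
        rw [htail, lf_mem_last hw hW₂ Z, hiff]
end

section
/- Let C be the unique sink component of dec(G) and let n = |V|. Then every node (v, X) of C admits a certifying walk consisting of at most n^2 vertices (counted with repetition). -/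
open List



lemma getLast_append_right {α : Type*} (l₁ l₂ : List α) (h : l₂ ≠ []) :
    (l₁ ++ l₂).getLast (by simp [h]) = l₂.getLast h := by
  rw [List.getLast_append]; simp [h]

lemma getLast_cast' {α : Type*} {l₁ l₂ : List α} (h : l₁ = l₂) (h₁ : l₁ ≠ []) :
    l₁.getLast h₁ = l₂.getLast (h ▸ h₁) := by subst h; rfl

lemma head_cast' {α : Type*} {l₁ l₂ : List α} (h : l₁ = l₂) (h₁ : l₁ ≠ []) :
    l₁.head h₁ = l₂.head (h ▸ h₁) := by subst h; rfl

lemma head_append_left {α : Type*} (l₁ l₂ : List α) (h : l₁ ≠ []) :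
    (l₁ ++ l₂).head (by simp [h]) = l₁.head h := by
  cases l₁ with
  | nil => exact absurd rfl h
  | cons a t => simp

lemma suffix_of_suffix_length_le' {α : Type*} {l₁ l₂ l₃ : List α}
    (h₁ : l₁ <:+ l₃) (h₂ : l₂ <:+ l₃) (h : l₁.length ≤ l₂.length) : l₁ <:+ l₂ := by
  rw [← List.reverse_prefix] at h₁ h₂ ⊢
  exact List.prefix_of_prefix_length_le h₁ h₂ (by simpa using h)

lemma IsSuffix.eq_of_length' {α : Type*} {l₁ l₂ : List α} (h : l₁ <:+ l₂)
    (hl : l₁.length = l₂.length) : l₁ = l₂ := by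
  have := List.IsPrefix.eq_of_length (List.reverse_prefix.2 h) (by simpa using hl)
  simpa using List.reverse_injective this

lemma mem_tail_append_cons {α : Type*} (A : List α) (w : α) (B : List α) {u : α}
    (hu : u ∈ B) : u ∈ (A ++ w :: B).tail := by
  cases A with
  | nil => simpa using hu
  | cons a A' => simp [hu]

lemma mem_tail_append_left {α : Type*} {A : List α} (hA : A ≠ []) (l : List α) {u : α}
    (h : u ∈ A.tail) : u ∈ (A ++ l).tail := by
  cases A with
  | nil => exact absurd rfl hA
  | cons a A' => simp only [List.cons_append, List.tail_cons] at h ⊢; exact List.mem_append_left _ h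

lemma walk_support_getLast {V : Type*} {G : SimpleGraph V} {u w : V} (p : G.Walk u w) :
    p.support.getLast (by simp) = w := by
  induction p with
  | nil => simp
  | @cons a b c h q ih =>
    rw [getLast_cast' (SimpleGraph.Walk.support_cons h q), List.getLast_cons (by simp)]
    exact ih

lemma exists_walk_of_chain {V : Type*} (G : SimpleGraph V) :
    ∀ (l : List V) (a : V), (a :: l).Chain' G.Adj →
      ∃ (b : V) (W : G.Walk a b), W.support = a :: l ∧
        (a :: l).getLast (List.cons_ne_nil _ _) = b := by
  intro l
  induction l with
  | nil => intro a _; exact ⟨a, SimpleGraph.Walk.nil, by simp, by simp⟩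
  | cons c l ih =>
    intro a hc
    simp only [List.Chain'] at hc; rw [List.isChain_cons_cons] at hc
    obtain ⟨b, W, hsup, hlast⟩ := ih c hc.2
    exact ⟨b, SimpleGraph.Walk.cons hc.1 W, by simp [hsup],
      by rw [List.getLast_cons (List.cons_ne_nil _ _)]; exact hlast⟩

lemma core {V U : Type*} [Fintype V] [Nonempty V] (G : SimpleGraph V) (ins : V → Bool) (elt : V → U)
    (v : V) (X : Set U) :
    ∀ (k : ℕ) (S : Finset U), S.card ≤ k →
      ∀ (L : List V) (hL : L ≠ []), L.Chain' G.Adj → L.getLast hL = v →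
      (∀ u ∈ L.tail, elt u ∈ S) →
      (∀ x ∈ S, ∃ L₁ w L₂, L = L₁ ++ w :: L₂ ∧ elt w = x ∧ (∀ u ∈ L₂, elt u ≠ x) ∧
        (x ∈ X ↔ ins w = true)) →
      ∃ (L' : List V) (hL' : L' ≠ []), L'.Chain' G.Adj ∧ L'.head hL' = L.head hL ∧
        L'.getLast hL' = v ∧ (∀ u ∈ L'.tail, elt u ∈ S) ∧
        (∀ x ∈ S, ∃ L₁ w L₂, L' = L₁ ++ w :: L₂ ∧ elt w = x ∧ (∀ u ∈ L₂, elt u ≠ x) ∧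
          (x ∈ X ↔ ins w = true)) ∧
        L'.length ≤ S.card * Fintype.card V + 1 := by
  classical
  intro k
  induction k with
  | zero =>
    intro S hSk L hL hchain hlast htail hM
    have hSe : S = ∅ := Finset.card_eq_zero.1 (Nat.le_zero.1 hSk)
    subst hSe
    have htail' : L.tail = [] := by
      rw [List.eq_nil_iff_forall_not_mem]
      intro u hu; simpa using htail u hu
    refine ⟨L, hL, hchain, rfl, hlast, htail, hM, ?_⟩
    have : L = [L.head hL] := by
      conv_lhs => rw [← List.cons_head_tail hL, htail']
    rw [this]; simp
  | succ k ih =>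
    intro S hSk L hL hchain hlast htail hM
    rcases S.eq_empty_or_nonempty with rfl | hS'
    · have htail' : L.tail = [] := by
        rw [List.eq_nil_iff_forall_not_mem]
        intro u hu; simpa using htail u hu
      refine ⟨L, hL, hchain, rfl, hlast, htail, hM, ?_⟩
      have : L = [L.head hL] := by
        conv_lhs => rw [← List.cons_head_tail hL, htail']
      rw [this]; simp
    · -- choose decompositions
      choose! L₁f wf L₂f hdec helt hnot htype using hM
      obtain ⟨x₁, hx₁S, hmax⟩ := S.exists_max_image (fun x => (L₂f x).length) hS'
      have hLAB : L = L₁f x₁ ++ wf x₁ :: L₂f x₁ := hdec x₁ hx₁S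
      have hwBsuf : wf x₁ :: L₂f x₁ <:+ L := ⟨L₁f x₁, hLAB.symm⟩
      have hBsuf : L₂f x₁ <:+ L := (List.suffix_cons (wf x₁) (L₂f x₁)).trans hwBsuf
      -- subclaim: for other x, their last-occurrence suffix sits inside B
      have hsub : ∀ x ∈ S.erase x₁, ∃ Cx : List V, L₂f x₁ = Cx ++ wf x :: L₂f x := by
        intro x hx
        obtain ⟨hxne, hxS⟩ := Finset.mem_erase.1 hx
        have hsufx : wf x :: L₂f x <:+ L := ⟨L₁f x, (hdec x hxS).symm⟩
        have hlt : (L₂f x).length < (L₂f x₁).length := by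
          rcases lt_or_eq_of_le (hmax x hxS) with h | h
          · exact h
          · exfalso
            have heq : wf x :: L₂f x = wf x₁ :: L₂f x₁ :=
              IsSuffix.eq_of_length'
                (suffix_of_suffix_length_le' hsufx hwBsuf (by simp [h])) (by simp [h])
            obtain ⟨h1, -⟩ := List.cons_eq_cons.1 heq
            exact hxne (by rw [← helt x hxS, h1, helt x₁ hx₁S])
        obtain ⟨Cx, hCx⟩ := suffix_of_suffix_length_le' hsufx hBsuf
          (by simp only [List.length_cons]; omega)
        exact ⟨Cx, hCx.symm⟩
      -- inner hypotheses
      have hchainInner : (wf x₁ :: L₂f x₁).Chain' G.Adj :=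
        (List.isChain_append.1 (by rw [← hLAB]; exact hchain)).2.1
      have hlastA : (L₁f x₁ ++ wf x₁ :: L₂f x₁).getLast (by simp) = v := by
        rw [← getLast_cast' hLAB hL]; exact hlast
      have hlastInner : (wf x₁ :: L₂f x₁).getLast (List.cons_ne_nil _ _) = v := by
        rw [← getLast_append_right (L₁f x₁) _ (List.cons_ne_nil _ _)]; exact hlastA
      have htailInner : ∀ u ∈ (wf x₁ :: L₂f x₁).tail, elt u ∈ S.erase x₁ := by
        intro u hu
        simp only [List.tail_cons] at hu
        refine Finset.mem_erase.2 ⟨hnot x₁ hx₁S u hu, ?_⟩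
        exact htail u (by rw [hLAB]; exact mem_tail_append_cons _ _ _ hu)
      have hMInner : ∀ x ∈ S.erase x₁, ∃ L₁ w L₂,
          wf x₁ :: L₂f x₁ = L₁ ++ w :: L₂ ∧ elt w = x ∧ (∀ u ∈ L₂, elt u ≠ x) ∧
          (x ∈ X ↔ ins w = true) := by
        intro x hx
        obtain ⟨Cx, hCx⟩ := hsub x hx
        obtain ⟨-, hxS⟩ := Finset.mem_erase.1 hx
        exact ⟨wf x₁ :: Cx, wf x, L₂f x, by rw [hCx]; simp, helt x hxS, hnot x hxS, htype x hxS⟩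
      have hcard : (S.erase x₁).card ≤ k := by
        rw [Finset.card_erase_of_mem hx₁S]
        omega
      obtain ⟨B', hB'ne, hB'chain, hB'head, hB'last, hB'tail, hB'M, hB'len⟩ :=
        ih (S.erase x₁) hcard (wf x₁ :: L₂f x₁) (List.cons_ne_nil _ _)
          hchainInner hlastInner htailInner hMInner
      have hB'head' : B'.head hB'ne = wf x₁ := by simpa using hB'head
      have hB'cons : B' = wf x₁ :: B'.tail := by
        rw [← hB'head']; exact (List.cons_head_tail hB'ne).symm
      -- the prefix walk, de-looped
      have hArm : L = (L₁f x₁ ++ [wf x₁]) ++ L₂f x₁ := by rw [hLAB]; simp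
      have hpre_ne : L₁f x₁ ++ [wf x₁] ≠ [] := by simp
      have hchainPre : (L₁f x₁ ++ [wf x₁]).Chain' G.Adj :=
        (List.isChain_append.1 (by rw [← hArm]; exact hchain)).1
      have hhd : (L₁f x₁ ++ [wf x₁]).head hpre_ne :: (L₁f x₁ ++ [wf x₁]).tail
          = L₁f x₁ ++ [wf x₁] := List.cons_head_tail _
      obtain ⟨b, Wa, hWsup, hWlast⟩ := exists_walk_of_chain G ((L₁f x₁ ++ [wf x₁]).tail)
        ((L₁f x₁ ++ [wf x₁]).head hpre_ne) (by rw [hhd]; exact hchainPre)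
      have hbw : b = wf x₁ := by
        have h1 : (L₁f x₁ ++ [wf x₁]).getLast (by simp) = b := by
          rw [getLast_cast' hhd.symm]; exact hWlast
        rw [← h1, getLast_append_right _ [wf x₁] (by simp)]
        simp
      subst hbw
      obtain ⟨Q, hQdef⟩ : ∃ Q : List V, Q = Wa.toPath.1.support := ⟨_, rfl⟩
      have ha₀ : ∃ a₀ : V, a₀ = (L₁f x₁ ++ [wf x₁]).head hpre_ne := ⟨_, rfl⟩
      obtain ⟨a₀, ha₀⟩ := ha₀
      have hQne : Q ≠ [] := by rw [hQdef]; exact SimpleGraph.Walk.support_ne_nil _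
      have hQchain : Q.Chain' G.Adj := by
        rw [hQdef]; exact SimpleGraph.Walk.isChain_adj_support _
      have hQnodup : Q.Nodup := by rw [hQdef]; exact Wa.toPath.2.support_nodup
      have hQcons : Q = a₀ :: Q.tail := by
        rw [hQdef, ha₀]; exact SimpleGraph.Walk.support_eq_cons _
      have hQlast : Q.getLast hQne = wf x₁ := by
        rw [getLast_cast' hQdef hQne]; exact walk_support_getLast _
      have hQsub : ∀ u ∈ Q, u ∈ L₁f x₁ ++ [wf x₁] := by
        intro u hu
        rw [hQdef] at hu
        have := SimpleGraph.Walk.support_toPath_subset Wa hu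
        rwa [hWsup, hhd] at this
      have hQlen : Q.length ≤ Fintype.card V := hQnodup.length_le_card
      have hQsnoc : Q.dropLast ++ [wf x₁] = Q := by
        rw [← hQlast]; exact List.dropLast_append_getLast hQne
      -- assemble
      have hq2 : (Q.dropLast ++ [wf x₁]).Chain' G.Adj := by rw [hQsnoc]; exact hQchain
      obtain ⟨hc1, -, hlink⟩ := List.isChain_append.1 hq2
      have hL'ne : Q.dropLast ++ B' ≠ [] := by simp [hB'ne]
      refine ⟨Q.dropLast ++ B', hL'ne, ?_, ?_, ?_, ?_, ?_, ?_⟩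
      · -- chain'
        refine List.isChain_append.2 ⟨hc1, hB'chain, ?_⟩
        intro a ha y hy
        have hy' : y = wf x₁ := by
          rw [hB'cons] at hy; simp at hy; exact hy.symm
        subst hy'
        exact hlink a ha _ (by simp)
      · -- head
        have hLhead : L.head hL = a₀ := by
          rw [head_cast' hArm hL, ha₀]
          exact head_append_left _ _ hpre_ne
        have hhead? : (Q.dropLast ++ B').head? = some (L.head hL) := by
          rcases hdq : Q.dropLast with - | ⟨c, D⟩
          · have hQw : Q = [wf x₁] := by rw [← hQsnoc, hdq]; rfl
            have ha₀w : a₀ = wf x₁ := by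
              have h2 := hQcons; rw [hQw] at h2
              exact (List.cons_eq_cons.1 h2.symm).1
            rw [List.nil_append, hB'cons]
            simp [hLhead, ha₀w]
          · have hc₀ : c = a₀ := by
              have h1 : Q = c :: (D ++ [wf x₁]) := by rw [← hQsnoc, hdq]; simp
              rw [hQcons] at h1
              exact ((List.cons_eq_cons.1 h1).1).symm
            simp [hLhead, hc₀]
        have h1 := List.head?_eq_head hL'ne
        rw [hhead?] at h1
        exact (Option.some.inj h1).symm
      · -- getLast
        rw [getLast_append_right _ _ hB'ne]; exact hB'last
      · -- tail elements
        intro u hu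
        have hcase : u ∈ Q.dropLast.tail ∨ u ∈ B' := by
          rcases hdq : Q.dropLast with - | ⟨c, D⟩
          · rw [hdq] at hu; right; simp only [List.nil_append] at hu
            exact List.mem_of_mem_tail hu
          · rw [hdq] at hu
            simp only [List.cons_append, List.tail_cons] at hu
            rcases List.mem_append.1 hu with h | h
            · left; simpa using h
            · right; exact h
        rcases hcase with h | h
        · -- in Q.dropLast.tail
          have huQt : u ∈ Q.tail := by
            have h1 : Q.tail = Q.dropLast.tail ++ [wf x₁] := by
              conv_lhs => rw [← hQsnoc]
              rcases hdq : Q.dropLast with - | ⟨c, D⟩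
              · rw [hdq] at h; simp at h
              · simp
            rw [h1]; exact List.mem_append_left _ h
          have hune : u ≠ a₀ := by
            intro h'
            have h2 := hQnodup
            rw [hQcons] at h2
            exact (List.nodup_cons.1 h2).1 (h' ▸ huQt)
          have huQ : u ∈ Q := List.mem_of_mem_tail huQt
          rcases List.mem_append.1 (hQsub u huQ) with hA | hw
          · have hAne : L₁f x₁ ≠ [] := List.ne_nil_of_mem hA
            have hh : a₀ = (L₁f x₁).head hAne := by
              rw [ha₀, head_append_left _ _ hAne]
            have huT : u ∈ (L₁f x₁).tail := by
              have := hA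
              rw [← List.cons_head_tail hAne] at this
              rcases List.mem_cons.1 this with h' | h'
              · exact absurd (h' ▸ hh.symm) hune
              · exact h'
            refine htail u ?_
            rw [hLAB]
            exact mem_tail_append_left hAne _ huT
          · have : u = wf x₁ := by simpa using hw
            rw [this, helt x₁ hx₁S]; exact hx₁S
        · -- in B'
          rw [hB'cons] at h
          rcases List.mem_cons.1 h with h' | h'
          · rw [h', helt x₁ hx₁S]; exact hx₁S
          · exact Finset.mem_of_mem_erase (hB'tail u h')
      · -- decompositions
        intro x hx
        by_cases hxx : x = x₁
        · subst hxx
          refine ⟨Q.dropLast, wf x, B'.tail, by rw [← hB'cons], helt _ hx₁S, ?_, htype _ hx₁S⟩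
          intro u hu
          exact (Finset.mem_erase.1 (hB'tail u hu)).1
        · obtain ⟨P₁, w, P₂, hBdec, h1, h2, h3⟩ := hB'M x (Finset.mem_erase.2 ⟨hxx, hx⟩)
          exact ⟨Q.dropLast ++ P₁, w, P₂, by rw [hBdec, List.append_assoc], h1, h2, h3⟩
      · -- length
        have h1 : Q.dropLast.length + 1 = Q.length := by
          conv_rhs => rw [← hQsnoc]
          simp
        obtain ⟨d, hd⟩ : ∃ d, S.card = d + 1 :=
          ⟨S.card - 1, by have := Finset.card_pos.2 hS'; omega⟩
        have h3 : B'.length ≤ d * Fintype.card V + 1 := by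
          rw [Finset.card_erase_of_mem hx₁S, hd] at hB'len
          simpa using hB'len
        rw [List.length_append, hd]
        have h4 : (d + 1) * Fintype.card V = d * Fintype.card V + Fintype.card V := by ring
        rw [h4]
        generalize d * Fintype.card V = m at h3 ⊢
        omega

lemma getLast_cast {α : Type*} {l₁ l₂ : List α} (h : l₁ = l₂) (h₁ : l₁ ≠ []) :
    l₁.getLast h₁ = l₂.getLast (h ▸ h₁) := by subst h; rfl


section folds
variable {V U : Type*} (ins : V → Bool) (elt : V → U)

lemma mem_decStep_of_ne {x : U} {w : V} (h : elt w ≠ x) (X : Set U) :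
    x ∈ decStep ins elt w X ↔ x ∈ X := by
  unfold decStep
  split <;> simp [Ne.symm h, h]

lemma mem_decStep_self {x : U} {w : V} (h : elt w = x) (X : Set U) :
    x ∈ decStep ins elt w X ↔ ins w = true := by
  unfold decStep
  rcases Bool.eq_false_or_eq_true (ins w) with hb | hb <;> simp [hb, h]

lemma foldl_mem_of_no_occ {x : U} :
    ∀ (L : List V), (∀ u ∈ L, elt u ≠ x) → ∀ X : Set U,
      (x ∈ L.foldl (fun Y u => decStep ins elt u Y) X ↔ x ∈ X) := by
  intro L
  induction L with
  | nil => intro _ X; simp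
  | cons a T ih =>
    intro h X
    simp only [List.foldl_cons]
    rw [ih (fun u hu => h u (List.mem_cons_of_mem _ hu)),
      mem_decStep_of_ne ins elt (h a (List.mem_cons_self))]

lemma foldl_mem_last {x : U} {w : V} (hw : elt w = x) (L₁ L₂ : List V)
    (h₂ : ∀ u ∈ L₂, elt u ≠ x) (X : Set U) :
    x ∈ (L₁ ++ w :: L₂).foldl (fun Y u => decStep ins elt u Y) X ↔ ins w = true := by
  rw [List.foldl_append, List.foldl_cons, foldl_mem_of_no_occ ins elt L₂ h₂,
    mem_decStep_self ins elt hw]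

lemma lift_reach (G : SimpleGraph V) :
    ∀ (T : List V) (u : V) (X : Set U), (u :: T).Chain' G.Adj →
      Relation.ReflTransGen (decAdj G ins elt) (u, X)
        ((u :: T).getLast (List.cons_ne_nil _ _), liftEndSet ins elt X (u :: T)) := by
  intro T
  induction T with
  | nil =>
    intro u X _
    simp only [liftEndSet, List.tail_cons, List.foldl_nil, List.getLast_singleton]
    exact Relation.ReflTransGen.refl
  | cons w T ih =>
    intro u X hc
    simp only [List.Chain'] at hc; rw [List.isChain_cons_cons] at hc
    refine Relation.ReflTransGen.head
      (show decAdj G ins elt (u, X) (w, decStep ins elt w X) from ⟨hc.1, rfl⟩) ?_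
    have h := ih w (decStep ins elt w X) hc.2
    have hg : (u :: w :: T).getLast (List.cons_ne_nil _ _)
        = (w :: T).getLast (List.cons_ne_nil _ _) := List.getLast_cons _
    have hl : liftEndSet ins elt X (u :: w :: T)
        = liftEndSet ins elt (decStep ins elt w X) (w :: T) := by
      simp [liftEndSet]
    rw [hg, hl]
    exact h

lemma reach_extract (G : SimpleGraph V) {p q : V × Set U}
    (h : Relation.ReflTransGen (decAdj G ins elt) p q) :
    ∃ l : List V, (p.1 :: l).Chain' G.Adj ∧
      (p.1 :: l).getLast (List.cons_ne_nil _ _) = q.1 ∧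
      liftEndSet ins elt p.2 (p.1 :: l) = q.2 := by
  induction h with
  | refl => exact ⟨[], by constructor, by simp, by simp [liftEndSet]⟩
  | @tail b c h₁ h₂ ih =>
    obtain ⟨l, hc, hlast, hlift⟩ := ih
    obtain ⟨hadj, hstep⟩ := h₂
    refine ⟨l ++ [c.1], ?_, ?_, ?_⟩
    · rw [show p.1 :: (l ++ [c.1]) = (p.1 :: l) ++ [c.1] by simp]
      simp only [List.Chain']; rw [List.isChain_append]
      refine ⟨hc, by simp, ?_⟩
      intro a ha y hy
      simp only [List.head?_cons, Option.mem_def, Option.some.injEq] at hy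
      rw [List.getLast?_eq_getLast (List.cons_ne_nil _ _), Option.mem_def,
        Option.some.injEq] at ha
      subst hy; rw [← ha, hlast]; exact hadj
    · rw [getLast_cast (show p.1 :: (l ++ [c.1]) = (p.1 :: l) ++ [c.1] by simp),
        getLast_append_right _ _ (by simp)]
      simp
    · simp only [liftEndSet, List.tail_cons] at hlift ⊢
      rw [List.foldl_append, hlift, List.foldl_cons, List.foldl_nil, ← hstep]

end folds

lemma exists_last_decomp {V : Type*} (p : V → Prop) :
    ∀ (W : List V), (∃ w ∈ W, p w) →
      ∃ W₁ w W₂, W = W₁ ++ w :: W₂ ∧ p w ∧ ∀ u ∈ W₂, ¬ p u := by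
  intro W
  induction W with
  | nil => rintro ⟨w, hw, -⟩; simp at hw
  | cons a T ih =>
    intro h
    by_cases hT : ∃ w ∈ T, p w
    · obtain ⟨W₁, w, W₂, rfl, hpw, hlast⟩ := ih hT
      exact ⟨a :: W₁, w, W₂, rfl, hpw, hlast⟩
    · push_neg at hT
      obtain ⟨w, hw, hpw⟩ := h
      rcases List.mem_cons.1 hw with rfl | hw'
      · exact ⟨[], w, T, rfl, hpw, hT⟩
      · exact absurd hpw (hT _ hw')

lemma exists_covering_walk {V : Type*} [Fintype V] (G : SimpleGraph V)
    (hconn : G.Connected) (v : V) :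
    ∃ W : G.Walk v v, ∀ u : V, u ∈ W.support := by
  classical
  suffices h : ∀ s : Finset V, ∃ W : G.Walk v v, ∀ u ∈ s, u ∈ W.support by
    obtain ⟨W, hW⟩ := h Finset.univ
    exact ⟨W, fun u => hW u (Finset.mem_univ u)⟩
  intro s
  induction s using Finset.induction_on with
  | empty => exact ⟨SimpleGraph.Walk.nil, by simp⟩
  | @insert a s ha ih =>
    obtain ⟨W, hW⟩ := ih
    obtain ⟨P⟩ := hconn v a
    refine ⟨W.append (P.append P.reverse), ?_⟩
    intro u hu
    rw [SimpleGraph.Walk.mem_support_append_iff]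
    rcases Finset.mem_insert.1 hu with rfl | hu
    · right; rw [SimpleGraph.Walk.mem_support_append_iff]
      left; exact SimpleGraph.Walk.end_mem_support P
    · left; exact hW u hu

/-- Every node of the unique sink component of `dec(G)` admits a certifying walk
with at most `n ^ 2` vertices (counted with repetition), where `n = |V|`. -/
theorem stmt_5 {V U : Type*} [Fintype V] [Fintype U]
    (G : SimpleGraph V) (hconn : G.Connected)
    (ins : V → Bool) (elt : V → U)
    (hIns : ∀ x : U, ∃ w : V, ins w = true ∧ elt w = x)
    (hDel : ∀ x : U, ∃ w : V, ins w = false ∧ elt w = x)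
    (C : Set (V × Set U)) (hC : IsSinkComponent (decAdj G ins elt) C)
    (huniq : ∀ C' : Set (V × Set U), IsSinkComponent (decAdj G ins elt) C' → C' = C)
    (v : V) (X : Set U) (hvX : (v, X) ∈ C) :
    ∃ W : List V, IsCertifyingWalk G ins elt v X W ∧ W.length ≤ (Fintype.card V) ^ 2 := by
  classical
  obtain ⟨hCne, hCconn, hCclosed⟩ := hC
  haveI hVne : Nonempty V := hconn.nonempty
  haveI hUne : Nonempty U := ⟨elt v⟩
  choose f₁ hf₁ hf₁' using hIns
  choose f₀ hf₀ hf₀' using hDel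
  -- 2 * |U| ≤ |V|
  have hinj : Function.Injective (fun p : U × Bool => if p.2 then f₁ p.1 else f₀ p.1) := by
    rintro ⟨x, b⟩ ⟨y, c⟩ h
    simp only at h
    rcases b <;> rcases c <;> simp only [if_true, if_false, Bool.false_eq_true,
      cond_true, cond_false, ite_true, ite_false] at h
    · exact Prod.ext (by rw [← hf₀' x, h, hf₀' y]) rfl
    · exact absurd (by rw [h, hf₁ y] : ins (f₀ x) = true) (by simp [hf₀ x])
    · exact absurd (by rw [h, hf₀ y] : ins (f₁ x) = false) (by simp [hf₁ x])
    · exact Prod.ext (by rw [← hf₁' x, h, hf₁' y]) rfl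
  have hcardU : 2 * Fintype.card U ≤ Fintype.card V := by
    have h := Fintype.card_le_of_injective _ hinj
    rwa [Fintype.card_prod, Fintype.card_bool, mul_comm] at h
  -- covering closed walk at v
  obtain ⟨W₀, hWall⟩ := exists_covering_walk G hconn v
  obtain ⟨W, hWdef⟩ : ∃ W : List V, W = W₀.support := ⟨_, rfl⟩
  have hWne : W ≠ [] := by rw [hWdef]; exact SimpleGraph.Walk.support_ne_nil _
  have hWchain : W.Chain' G.Adj := by rw [hWdef]; exact SimpleGraph.Walk.isChain_adj_support _
  have hWcons : W = v :: W.tail := by rw [hWdef]; exact SimpleGraph.Walk.support_eq_cons _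
  have hWlast : W.getLast hWne = v := by
    rw [getLast_cast' hWdef hWne]; exact walk_support_getLast _
  have hWall' : ∀ u : V, u ∈ W := by intro u; rw [hWdef]; exact hWall u
  have hW2 : 2 ≤ W.length := by
    by_contra h
    push_neg at h
    interval_cases hWl : W.length
    · exact hWne (List.length_eq_zero_iff.1 hWl)
    · obtain ⟨a, ha⟩ := List.length_eq_one_iff.1 hWl
      have h1 : f₁ (elt v) ∈ W := hWall' _
      have h0 : f₀ (elt v) ∈ W := hWall' _
      rw [ha, List.mem_singleton] at h1 h0
      have : ins a = true := by rw [← h1]; exact hf₁ _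
      rw [← h0, hf₀ _] at this
      simp at this
  -- lift the covering walk from X
  have hr1 : Relation.ReflTransGen (decAdj G ins elt) (v, X)
      (v, liftEndSet ins elt X W) := by
    have h := lift_reach ins elt G W.tail v X (by rw [← hWcons]; exact hWchain)
    have h2 : (v :: W.tail).getLast (List.cons_ne_nil _ _) = v :=
      (getLast_cast' hWcons hWne).symm.trans hWlast
    rw [h2] at h
    exact h
  have hY₁C : (v, liftEndSet ins elt X W) ∈ C := hCclosed _ hvX _ hr1
  have hr2 : Relation.ReflTransGen (decAdj G ins elt)
      (v, liftEndSet ins elt X W) (v, X) := hCconn _ hY₁C _ hvX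
  obtain ⟨l, hlchain, hllast, hllift⟩ := reach_extract ins elt G hr2
  -- the combined closed walk F
  obtain ⟨F, hF⟩ : ∃ F : List V, F = W ++ l := ⟨_, rfl⟩
  have hFne : F ≠ [] := by rw [hF]; simp [hWne]
  have hFtail : F.tail = W.tail ++ l := by
    rw [hF]
    conv_lhs => rw [hWcons]
    rfl
  have hFchain : F.Chain' G.Adj := by
    rw [hF]
    refine List.isChain_append.2 ⟨hWchain, hlchain.tail, ?_⟩
    intro a ha y hy
    rw [List.getLast?_eq_getLast hWne, Option.mem_def, Option.some.injEq] at ha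
    have h3 : G.Adj v y := by
      have := hlchain
      simp only [List.Chain'] at this; rw [List.isChain_cons] at this
      exact this.1 y hy
    rw [← ha, hWlast]
    exact h3
  have hFhead? : F.head? = some v := by rw [hF, hWcons]; simp
  have hFlast : F.getLast hFne = v := by
    rcases eq_or_ne l [] with rfl | hlne
    · rw [getLast_cast' (by rw [hF, List.append_nil] : F = W)]; exact hWlast
    · rw [getLast_cast' hF hFne, getLast_append_right W l hlne]
      have := hllast
      rw [List.getLast_cons hlne] at this
      exact this
  have hXfix : ∀ x : U,
      (x ∈ F.tail.foldl (fun Y u => decStep ins elt u Y) X ↔ x ∈ X) := by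
    intro x
    rw [hFtail, List.foldl_append]
    have h5 : List.foldl (fun Y u => decStep ins elt u Y)
        (List.foldl (fun Y u => decStep ins elt u Y) X W.tail) l = X := hllift
    rw [h5]
  have hlen2 : 2 ≤ F.length := le_trans hW2 (by rw [hF]; simp)
  -- F is a certifying walk
  have hcert : ∀ x : U, ∃ W₁ w W₂, F = W₁ ++ w :: W₂ ∧ elt w = x ∧
      (∀ u ∈ W₂, elt u ≠ x) ∧ (x ∈ X ↔ ins w = true) := by
    intro x
    have hocc : ∃ w ∈ F, elt w = x :=
      ⟨f₁ x, by rw [hF]; exact List.mem_append_left _ (hWall' _), hf₁' x⟩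
    obtain ⟨F₁, w, F₂, hFdec, hwx, hnox⟩ := exists_last_decomp (fun w => elt w = x) F hocc
    refine ⟨F₁, w, F₂, hFdec, hwx, hnox, ?_⟩
    rcases F₁ with - | ⟨c, F₁'⟩
    · exfalso
      rw [List.nil_append] at hFdec
      have hF₂ne : F₂ ≠ [] := by
        intro h
        rw [hFdec, h] at hlen2
        simp at hlen2
      have hgl : F.getLast hFne ∈ F₂ := by
        rw [getLast_cast' hFdec hFne, List.getLast_cons hF₂ne]
        exact List.getLast_mem hF₂ne
      rw [hFlast] at hgl
      have hwv : w = v := by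
        have h := hFhead?
        rw [hFdec, List.head?_cons, Option.some.injEq] at h
        exact h
      exact hnox v hgl (by rw [← hwv]; exact hwx)
    · have htF : F.tail = F₁' ++ w :: F₂ := by rw [hFdec]; rfl
      have h := foldl_mem_last ins elt hwx F₁' F₂ hnox X
      rw [← htF] at h
      exact (hXfix x).symm.trans h
  -- shorten with the core lemma
  obtain ⟨L', hL'ne, hL'chain, hL'head, hL'last, -, hL'M, hL'len⟩ :=
    core G ins elt v X (Fintype.card U) Finset.univ le_rfl F hFne hFchain hFlast
      (fun u _ => Finset.mem_univ _) (fun x _ => hcert x)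
  have hFheadv : F.head hFne = v := by
    have h := List.head?_eq_head hFne
    rw [hFhead?] at h
    exact (Option.some.inj h).symm
  refine ⟨L', ⟨hL'ne, hL'chain, ?_, ?_, fun x => hL'M x (Finset.mem_univ x)⟩, ?_⟩
  · rw [List.head?_eq_head hL'ne, hL'head, hFheadv]
  · rw [List.getLast?_eq_getLast hL'ne, hL'last]
  · -- arithmetic
    have h1 : 1 ≤ Fintype.card U := Fintype.card_pos
    have h2 : Fintype.card U ≤ Fintype.card V - 1 := by omega
    calc L'.length ≤ Fintype.card U * Fintype.card V + 1 := hL'len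
      _ ≤ (Fintype.card V - 1) * Fintype.card V + 1 :=
          Nat.add_le_add_right (Nat.mul_le_mul_right _ h2) 1
      _ ≤ Fintype.card V ^ 2 := by
          have hn : 2 ≤ Fintype.card V := by omega
          rcases Nat.exists_eq_add_of_le hn with ⟨m, hm⟩
          rw [hm, show 2 + m - 1 = m + 1 from by omega, pow_two]
          nlinarith
end

section
/- Let C be the unique sink component of dec(G) and let n = |V|. Then any two nodes (u, X) and (v, Y) of C are joined by a directed walk inside C of length at most 2n^2 edges; i.e., the diameter of C is O(n^2). -/
namespace EventAux

variable {V U : Type*}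

section lastLabel
variable [DecidableEq U] (ins : V → Bool) (elt : V → U)

def lastLabel (T : List V) (x : U) : Option Bool :=
  T.foldl (fun o w => if elt w = x then some (ins w) else o) none

lemma foldl_lastLabel (x : U) : ∀ (T : List V) (o : Option Bool),
    T.foldl (fun o w => if elt w = x then some (ins w) else o) o
      = (lastLabel ins elt T x).or o := by
  intro T
  induction T with
  | nil => intro o; simp [lastLabel]
  | cons w T ih =>
      intro o
      simp only [lastLabel, List.foldl_cons]
      rw [ih ((fun o w => if elt w = x then some (ins w) else o) o w),
        ih ((fun o w => if elt w = x then some (ins w) else o) none w)]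
      cases hL : lastLabel ins elt T x <;> by_cases hw : elt w = x <;> simp [hL, hw]

lemma lastLabel_cons (x : U) (w : V) (T : List V) :
    lastLabel ins elt (w :: T) x
      = (lastLabel ins elt T x).or (if elt w = x then some (ins w) else none) := by
  simp only [lastLabel, List.foldl_cons]
  rw [foldl_lastLabel]
  rfl

lemma lastLabel_append (x : U) (A B : List V) :
    lastLabel ins elt (A ++ B) x = (lastLabel ins elt B x).or (lastLabel ins elt A x) := by
  simp only [lastLabel, List.foldl_append]
  rw [foldl_lastLabel]
  rfl

lemma lastLabel_eq_none {x : U} {T : List V} (h : ∀ w ∈ T, elt w ≠ x) :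
    lastLabel ins elt T x = none := by
  induction T with
  | nil => rfl
  | cons w T ih =>
      rw [lastLabel_cons, ih (fun z hz => h z (List.mem_cons_of_mem _ hz)),
        if_neg (h w (List.mem_cons_self))]
      rfl

lemma mem_foldl_decStep (x : U) : ∀ (T : List V) (X : Set U),
    x ∈ T.foldl (fun Y w => decStep ins elt w Y) X ↔
      (lastLabel ins elt T x).elim (x ∈ X) (fun b => b = true) := by
  intro T
  induction T with
  | nil => intro X; simp [lastLabel]
  | cons w T ih =>
      intro X
      rw [List.foldl_cons, ih, lastLabel_cons]
      cases h : lastLabel ins elt T x with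
      | some b => simp
      | none =>
          by_cases hw : elt w = x
          · subst hw
            by_cases hb : ins w <;> simp [decStep, hb]
          · have hx : x ≠ elt w := fun h' => hw h'.symm
            by_cases hb : ins w <;> simp [decStep, hb, hx, hw]

lemma foldl_eq_of_lastLabel_eq {T T' : List V} (X : Set U)
    (h : ∀ x : U, lastLabel ins elt T' x = lastLabel ins elt T x) :
    T'.foldl (fun Y w => decStep ins elt w Y) X = T.foldl (fun Y w => decStep ins elt w Y) X := by
  ext x
  rw [mem_foldl_decStep, mem_foldl_decStep, h]

end lastLabel

lemma getLast?_cons_of_ne_nil {a : V} {l : List V} (h : l ≠ []) :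
    (a :: l).getLast? = l.getLast? := by
  cases l with
  | nil => exact absurd rfl h
  | cons b l => exact List.getLast?_cons_cons

lemma eraseWalk {R : V → V → Prop} : ∀ (l : List V), l.Chain' R →
    ∃ p : List V, p.Chain' R ∧ p.head? = l.head? ∧ p.getLast? = l.getLast? ∧
      (∀ z ∈ p, z ∈ l) ∧ p.Nodup := by
  intro l
  induction l with
  | nil => exact fun _ => ⟨[], by simp [List.Chain']⟩
  | cons w t ih =>
      intro hc
      obtain ⟨p, hpc, hph, hpl, hpm, hpn⟩ := ih hc.tail
      by_cases hw : w ∈ p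
      · obtain ⟨p₁, p₂, rfl⟩ := List.append_of_mem hw
        have hsuf : (w :: p₂) <:+ p₁ ++ w :: p₂ := ⟨p₁, rfl⟩
        have htne : t ≠ [] := by
          rintro rfl
          exact absurd (hpm w hw) List.not_mem_nil
        refine ⟨w :: p₂, hpc.suffix hsuf, rfl, ?_, ?_, hpn.sublist hsuf.sublist⟩
        · rw [getLast?_cons_of_ne_nil htne, ← hpl, List.getLast?_append]
          rw [List.getLast?_cons]
          rfl
        · intro z hz
          rcases List.mem_cons.mp hz with rfl | hz
          · exact List.mem_cons_self
          · exact List.mem_cons_of_mem _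
              (hpm z (List.mem_append.mpr (Or.inr (List.mem_cons_of_mem _ hz))))
      · refine ⟨w :: p, ?_, rfl, ?_, ?_, hpn.cons hw⟩
        · refine List.isChain_cons.mpr ⟨?_, hpc⟩
          intro y hy
          rw [hph] at hy
          exact (List.isChain_cons.mp hc).1 y hy
        · cases t with
          | nil =>
              have : p = [] := List.head?_eq_none_iff.mp (by simpa using hph)
              subst this; rfl
          | cons c t' =>
              have hpne : p ≠ [] := by
                rintro rfl; simp at hph
              rw [getLast?_cons_of_ne_nil hpne, hpl]
              exact (getLast?_cons_of_ne_nil (by simp)).symm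
        · intro z hz
          rcases List.mem_cons.mp hz with rfl | hz
          · exact List.mem_cons_self
          · exact List.mem_cons_of_mem _ (hpm z hz)

lemma exists_last_sat {p : V → Prop} : ∀ (l : List V), (∃ a ∈ l, p a) →
    ∃ l₁ a l₂, l = l₁ ++ a :: l₂ ∧ p a ∧ ∀ b ∈ l₂, ¬ p b := by
  classical
  intro l
  induction l using List.reverseRecOn with
  | nil => rintro ⟨a, ha, -⟩; exact absurd ha List.not_mem_nil
  | append_singleton l c ih =>
      intro h
      by_cases hc : p c
      · exact ⟨l, c, [], rfl, hc, by simp⟩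
      · obtain ⟨a, ha, hpa⟩ := h
        have ha' : a ∈ l := by
          rcases List.mem_append.mp ha with h' | h'
          · exact h'
          · simp at h'; subst h'; exact absurd hpa hc
        obtain ⟨l₁, b, l₂, rfl, hb, hl₂⟩ := ih ⟨a, ha', hpa⟩
        refine ⟨l₁, b, l₂ ++ [c], by simp, hb, ?_⟩
        intro z hz
        rcases List.mem_append.mp hz with h' | h'
        · exact hl₂ z h'
        · simp at h'; subst h'; exact hc

section shorten
variable [DecidableEq U] [Fintype V] (G : SimpleGraph V) (ins : V → Bool) (elt : V → U)

lemma shorten : ∀ (N : ℕ) (W : List V), W.length ≤ N → W ≠ [] → W.Chain' G.Adj →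
    ∀ (S : Finset U),
    ∃ W' : List V, W' ≠ [] ∧ W'.Chain' G.Adj ∧ W'.head? = W.head? ∧
      W'.getLast? = W.getLast? ∧
      (∀ x ∈ S, lastLabel ins elt W'.tail x = lastLabel ins elt W.tail x) ∧
      W'.length ≤ (S.card + 1) * Fintype.card V + 1 := by
  intro N
  induction N with
  | zero =>
      intro W hlen hne _ _
      exact absurd (List.length_eq_zero_iff.mp (Nat.le_zero.mp hlen)) hne
  | succ N ih =>
      intro W hlen hne hc S
      by_cases hS : ∃ w ∈ W.tail, elt w ∈ S
      · -- decompose the tail at the last S-touch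
        obtain ⟨T₁, w₀, T₂, hsplit, hw₀, hT₂⟩ := exists_last_sat (p := fun w => elt w ∈ S) W.tail hS
        set a := W.head hne with ha
        have hWa : a :: W.tail = W := List.cons_head_tail hne
        have hdec : W = (a :: T₁) ++ w₀ :: T₂ := by
          rw [← hWa, hsplit]; rfl
        -- chain facts
        have hc1 : (a :: T₁).Chain' G.Adj := (List.isChain_append.mp (hdec ▸ hc)).1
        have hc2 : (w₀ :: T₂).Chain' G.Adj := (List.isChain_append.mp (hdec ▸ hc)).2.1
        have hlink : ∀ x ∈ (a :: T₁).getLast?, ∀ y ∈ (w₀ :: T₂).head?, G.Adj x y :=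
          (List.isChain_append.mp (hdec ▸ hc)).2.2
        -- shorten the prefix by IH
        have hlen1 : (a :: T₁).length ≤ N := by
          have := hdec ▸ hlen
          simp only [List.length_append, List.length_cons] at this ⊢
          omega
        obtain ⟨W₁, hW₁ne, hW₁c, hW₁h, hW₁l, hW₁lab, hW₁len⟩ :=
          ih (a :: T₁) hlen1 (by simp) hc1 (S.erase (elt w₀))
        -- loop-erase the suffix
        obtain ⟨P, hPc, hPh, hPl, hPm, hPn⟩ := eraseWalk (R := G.Adj) (w₀ :: T₂) hc2
        have hPh' : P.head? = some w₀ := hPh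
        have hPne : P ≠ [] := by rintro rfl; simp at hPh'
        have hPcons : w₀ :: P.tail = P := by
          have := List.cons_head_tail hPne
          rwa [show P.head hPne = w₀ by
            have := List.head?_eq_head (l := P) hPne
            rw [hPh'] at this; exact (Option.some_injective _ this.symm)] at this
        -- crucial: the vertex w₀ does not occur in T₂
        have hw₀T₂ : w₀ ∉ T₂ := fun h => hT₂ w₀ h hw₀
        have hPtail : ∀ z ∈ P.tail, z ∈ T₂ := by
          intro z hz
          have hzP : z ∈ P := by rw [← hPcons]; exact List.mem_cons_of_mem _ hz
          have hzw : z ≠ w₀ := by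
            rintro rfl
            have : z ∉ P.tail := by
              have := hPn; rw [← hPcons] at this
              exact this.notMem
            exact this hz
          rcases List.mem_cons.mp (hPm z hzP) with h' | h'
          · exact absurd h' hzw
          · exact h'
        refine ⟨W₁ ++ P, by simp [hW₁ne], ?_, ?_, ?_, ?_, ?_⟩
        · exact List.isChain_append.mpr ⟨hW₁c, hPc, by
            intro x hx y hy
            rw [hW₁l] at hx
            exact hlink x hx y (by rw [hPh'] at hy; simpa using hy)⟩
        · rw [List.head?_append_of_ne_nil _ hW₁ne, hW₁h, hdec,
            List.head?_append_of_ne_nil _ (by simp)]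
        · rw [List.getLast?_append, hPl, hdec, List.getLast?_append]
          have : (w₀ :: T₂).getLast?.isSome := by
            rw [List.getLast?_cons]; rfl
          cases h' : (w₀ :: T₂).getLast? with
          | none => rw [h'] at this; simp at this
          | some z => rfl
        · -- label preservation
          intro x hx
          have htail : (W₁ ++ P).tail = W₁.tail ++ P := by
            cases W₁ with
            | nil => exact absurd rfl hW₁ne
            | cons b l => rfl
          have hWtail : W.tail = T₁ ++ w₀ :: T₂ := hsplit
          rw [htail, hWtail, lastLabel_append, lastLabel_append]
          have hT₂x : lastLabel ins elt T₂ x = none :=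
            lastLabel_eq_none ins elt (fun z hz hzx => hT₂ z hz (hzx ▸ hx))
          have hPtailx : lastLabel ins elt P.tail x = none :=
            lastLabel_eq_none ins elt (fun z hz hzx => hT₂ z (hPtail z hz) (hzx ▸ hx))
          have hP : lastLabel ins elt P x = lastLabel ins elt (w₀ :: T₂) x := by
            rw [← hPcons, lastLabel_cons, lastLabel_cons, hT₂x, hPtailx]
          rw [hP, lastLabel_cons, hT₂x]
          by_cases hwx : elt w₀ = x
          · simp [hwx]
          · simp only [if_neg hwx]
            have hx' : x ∈ S.erase (elt w₀) :=
              Finset.mem_erase.mpr ⟨fun h => hwx h.symm, hx⟩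
            have := hW₁lab x hx'
            simp only [List.tail_cons] at this
            simp [this]
        · -- length bound
          have hP : P.length ≤ Fintype.card V := hPn.length_le_card
          have hcard : (S.erase (elt w₀)).card + 1 = S.card := by
            rw [Finset.card_erase_of_mem hw₀]
            have : 0 < S.card := Finset.card_pos.mpr ⟨elt w₀, hw₀⟩
            omega
          rw [List.length_append]
          calc W₁.length + P.length
              ≤ ((S.erase (elt w₀)).card + 1) * Fintype.card V + 1 + Fintype.card V := by
                omega
            _ = (S.card + 1) * Fintype.card V + 1 := by rw [← hcard]; ring
      · -- no element of S is touched: just loop-erase everything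
        push_neg at hS
        obtain ⟨P, hPc, hPh, hPl, hPm, hPn⟩ := eraseWalk (R := G.Adj) W hc
        have hPne : P ≠ [] := by
          rintro rfl
          rw [List.head?_eq_none_iff.mpr rfl] at hPh
          exact hne (List.head?_eq_none_iff.mp hPh.symm)
        refine ⟨P, hPne, hPc, hPh, hPl, ?_, ?_⟩
        · intro x hx
          have h1 : lastLabel ins elt W.tail x = none :=
            lastLabel_eq_none ins elt (fun z hz hzx => hS z hz (hzx ▸ hx))
          have h2 : lastLabel ins elt P.tail x = none := by
            refine lastLabel_eq_none ins elt (fun z hz hzx => ?_)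
            have hzP : z ∈ P := by
              rw [← List.cons_head_tail hPne]; exact List.mem_cons_of_mem _ hz
            have hzhead : z ≠ P.head hPne := by
              rintro rfl
              have hnd := hPn
              rw [← List.cons_head_tail hPne] at hnd
              exact hnd.notMem hz
            have hheads : P.head hPne = W.head hne := by
              have hp1 := List.head?_eq_head (l := P) hPne
              have hp2 := List.head?_eq_head (l := W) hne
              rw [hPh, hp2] at hp1
              exact (Option.some_injective _ hp1).symm
            have hzW : z ∈ W := hPm z hzP
            rw [← List.cons_head_tail hne] at hzW
            rcases List.mem_cons.mp hzW with rfl | hzt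
            · exact hzhead hheads.symm
            · exact hS z hzt (hzx ▸ hx)
          rw [h1, h2]
        · calc P.length ≤ Fintype.card V := hPn.length_le_card
            _ ≤ (S.card + 1) * Fintype.card V + 1 := by nlinarith [Nat.zero_le S.card]

end shorten

section lifted
variable (G : SimpleGraph V) (ins : V → Bool) (elt : V → U)

def liftedL : V × Set U → List V → List (V × Set U)
  | st, [] => [st]
  | st, w :: T => st :: liftedL (w, decStep ins elt w st.2) T

lemma liftedL_length : ∀ (T : List V) (st : V × Set U),
    (liftedL ins elt st T).length = T.length + 1 := by
  intro T
  induction T with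
  | nil => intro st; rfl
  | cons w T ih => intro st; simp [liftedL, ih]

lemma liftedL_ne_nil (T : List V) (st : V × Set U) : liftedL ins elt st T ≠ [] := by
  cases T <;> simp [liftedL]

lemma liftedL_head? : ∀ (T : List V) (st : V × Set U),
    (liftedL ins elt st T).head? = some st := by
  intro T st
  cases T <;> rfl

lemma liftedL_getLast? : ∀ (T : List V) (st : V × Set U),
    (liftedL ins elt st T).getLast?
      = some (T.getLastD st.1, T.foldl (fun Y w => decStep ins elt w Y) st.2) := by
  intro T
  induction T with
  | nil => intro st; rfl
  | cons w T ih =>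
      intro st
      rw [liftedL, getLast?_cons_of_ne_nil (liftedL_ne_nil ins elt _ _), ih,
        List.getLastD_cons, List.foldl_cons]

lemma liftedL_chain' : ∀ (T : List V) (st : V × Set U), List.Chain G.Adj st.1 T →
    (liftedL ins elt st T).Chain' (decAdj G ins elt) := by
  intro T
  induction T with
  | nil => intro st _; simp [liftedL, List.Chain']
  | cons w T ih =>
      intro st hc
      rcases List.isChain_cons_cons.mp hc with ⟨hadj, hc⟩
      refine List.isChain_cons.mpr ⟨?_, ih (w, decStep ins elt w st.2) hc⟩
      intro y hy
      rw [liftedL_head?] at hy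
      cases hy
      exact ⟨hadj, rfl⟩

lemma liftedL_mem_C (C : Set (V × Set U))
    (hclosed : ∀ p ∈ C, ∀ q, Relation.ReflTransGen (decAdj G ins elt) p q → q ∈ C) :
    ∀ (T : List V) (st : V × Set U), List.Chain G.Adj st.1 T → st ∈ C →
      ∀ p ∈ liftedL ins elt st T, p ∈ C := by
  intro T
  induction T with
  | nil =>
      intro st _ hst p hp
      simp [liftedL] at hp
      exact hp ▸ hst
  | cons w T ih =>
      intro st hc hst p hp
      rcases List.isChain_cons_cons.mp hc with ⟨hadj, hc⟩
      rcases List.mem_cons.mp hp with rfl | hp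
      · exact hst
      · have hst' : (w, decStep ins elt w st.2) ∈ C :=
          hclosed st hst _ (Relation.ReflTransGen.single ⟨hadj, rfl⟩)
        exact ih (w, decStep ins elt w st.2) hc hst' p hp

lemma rtg_walk : ∀ {p q : V × Set U}, Relation.ReflTransGen (decAdj G ins elt) p q →
    ∃ W : List V, W ≠ [] ∧ W.Chain' G.Adj ∧ W.head? = some p.1 ∧ W.getLast? = some q.1 ∧
      W.tail.foldl (fun Y w => decStep ins elt w Y) p.2 = q.2 := by
  intro p q h
  induction h with
  | refl => exact ⟨[p.1], by simp [List.Chain']⟩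
  | @tail b c hr hstep ih =>
      obtain ⟨W, hne, hc, hh, hl, hf⟩ := ih
      refine ⟨W ++ [c.1], by simp, ?_, ?_, by simp, ?_⟩
      · refine List.isChain_append.mpr ⟨hc, by simp, ?_⟩
        intro x hx y hy
        rw [hl] at hx
        simp at hy
        cases hx; cases hy
        exact hstep.1
      · rw [List.head?_append_of_ne_nil _ hne]; exact hh
      · have : (W ++ [c.1]).tail = W.tail ++ [c.1] := by
          cases W with
          | nil => exact absurd rfl hne
          | cons a l => rfl
        rw [this, List.foldl_append, hf]
        exact hstep.2.symm

end lifted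

end EventAux

/-- Any two nodes of the unique sink component `C` of `dec(G)` are joined by a
directed walk inside `C` with at most `2 n ^ 2` edges, where `n = |V|`. -/
theorem stmt_6 {V U : Type*} [Fintype V] [Fintype U]
    (G : SimpleGraph V) (hconn : G.Connected)
    (ins : V → Bool) (elt : V → U)
    (hIns : ∀ x : U, ∃ w : V, ins w = true ∧ elt w = x)
    (hDel : ∀ x : U, ∃ w : V, ins w = false ∧ elt w = x)
    (C : Set (V × Set U)) (hC : IsSinkComponent (decAdj G ins elt) C)
    (huniq : ∀ C' : Set (V × Set U), IsSinkComponent (decAdj G ins elt) C' → C' = C)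
    (u v : V) (X Y : Set U) (hu : (u, X) ∈ C) (hv : (v, Y) ∈ C) :
    ∃ L : List (V × Set U),
      L.Chain' (decAdj G ins elt) ∧
      L.head? = some (u, X) ∧ L.getLast? = some (v, Y) ∧
      (∀ p ∈ L, p ∈ C) ∧
      L.length ≤ 2 * (Fintype.card V) ^ 2 + 1 := by
  classical
  obtain ⟨W₀, hW₀ne, hW₀c, hW₀h, hW₀l, hW₀f⟩ :=
    EventAux.rtg_walk G ins elt (hC.2.1 (u, X) hu (v, Y) hv)
  obtain ⟨W', hW'ne, hW'c, hW'h, hW'l, hW'lab, hW'len⟩ :=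
    EventAux.shorten G ins elt W₀.length W₀ le_rfl hW₀ne hW₀c Finset.univ
  have hWh' : W'.head? = some u := by rw [hW'h]; exact hW₀h
  have hWcons : W' = u :: W'.tail := by
    have hu' : W'.head hW'ne = u := by
      have h := List.head?_eq_head (l := W') hW'ne
      rw [hWh'] at h
      exact Option.some_injective _ h.symm
    rw [← hu']
    exact (List.cons_head_tail hW'ne).symm
  have hchain : List.Chain G.Adj u W'.tail := by
    have h := hW'c
    rw [hWcons] at h
    exact h
  refine ⟨EventAux.liftedL ins elt (u, X) W'.tail,
    EventAux.liftedL_chain' G ins elt _ _ hchain,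
    EventAux.liftedL_head? ins elt _ _, ?_, ?_, ?_⟩
  · rw [EventAux.liftedL_getLast?]
    have hfst : W'.tail.getLastD u = v := by
      have h1 : W'.getLast? = some v := by rw [hW'l]; exact hW₀l
      rw [hWcons, List.getLast?_cons] at h1
      have := Option.some_injective _ h1
      rw [List.getLastD_eq_getLast?]
      exact this
    have hsnd : W'.tail.foldl (fun Z w => decStep ins elt w Z) X = Y := by
      have heq := EventAux.foldl_eq_of_lastLabel_eq ins elt (T := W₀.tail) (T' := W'.tail) X
        (fun x => hW'lab x (Finset.mem_univ x))
      rw [heq]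
      exact hW₀f
    show some (W'.tail.getLastD u, W'.tail.foldl (fun Z w => decStep ins elt w Z) X) = _
    rw [hfst, hsnd]
  · exact EventAux.liftedL_mem_C G ins elt C hC.2.2 _ _ hchain hu
  · rw [EventAux.liftedL_length]
    have h1 : W'.tail.length + 1 = W'.length := by
      conv_rhs => rw [hWcons]
      rfl
    have hU : Fintype.card U ≤ Fintype.card V :=
      Fintype.card_le_of_surjective elt (fun x => ⟨(hIns x).choose, (hIns x).choose_spec.2⟩)
    have hV : 1 ≤ Fintype.card V := Fintype.card_pos_iff.mpr ⟨u⟩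
    rw [Finset.card_univ] at hW'len
    have hsq : (Fintype.card V) ^ 2 = Fintype.card V * Fintype.card V := sq (Fintype.card V) ▸ rfl
    nlinarith [hW'len, hU, hV, h1]
end

section
/- Let m ≥ 2 and let P be the event graph that is a path on 2m+1 vertices whose labels, in order along the path, are 'i m', 'i (m-1)', ..., 'i 1', 'd m', 'd 1', 'd 2', ..., 'd m', and let v denote the middle vertex (the one labeled 'd m'). Then for every subset X ⊆ {1, ..., m-1}, the pair (v, X) is a node of the unique sink component C of dec(P). -/
/-- Lower bound example: `P` is a path on `2m+1` vertices labeled, in order,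
`i m, i (m-1), …, i 1, d m, d 1, d 2, …, d m` (the universe `{1, …, m}` is modeled as
`Fin m`, with `j : Fin m` standing for the element `j + 1`). For every subset
`X ⊆ {1, …, m-1}`, the pair `(v, X)` is a node of the unique sink component of
`dec(P)`, where `v` is the middle vertex (the one labeled `d m`). -/
theorem stmt_7 (m : ℕ) (hm : 2 ≤ m)
    (P : SimpleGraph (Fin (2 * m + 1)))
    (hP : ∀ a b : Fin (2 * m + 1), P.Adj a b ↔ (a.val + 1 = b.val ∨ b.val + 1 = a.val))
    (ins : Fin (2 * m + 1) → Bool) (hins : ∀ a, ins a = decide (a.val < m))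
    (elt : Fin (2 * m + 1) → Fin m)
    (helt : ∀ a, (elt a).val =
      if a.val < m then m - 1 - a.val else if a.val = m then m - 1 else a.val - m - 1)
    (v : Fin (2 * m + 1)) (hv : v.val = m)
    (C : Set (Fin (2 * m + 1) × Set (Fin m)))
    (hC : IsSinkComponent (decAdj P ins elt) C)
    (huniq : ∀ C', IsSinkComponent (decAdj P ins elt) C' → C' = C)
    (X : Set (Fin m)) (hX : ∀ x ∈ X, x.val < m - 1) :
    (v, X) ∈ C := by
  classical
  have adjP : ∀ (a b : ℕ) (ha : a ≤ 2*m) (hb : b ≤ 2*m) (hab : a + 1 = b ∨ b + 1 = a),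
      P.Adj ⟨a, by omega⟩ ⟨b, by omega⟩ := fun a b ha hb h => (hP _ _).mpr h
  -- entering vertex a < m inserts element m-1-a
  have stepIns : ∀ (a : ℕ) (ha : a < m) (b : Fin (2*m+1)) (hb : P.Adj b ⟨a, by omega⟩)
      (Y : Set (Fin m)),
      decAdj P ins elt (b, Y) ((⟨a, by omega⟩ : Fin (2*m+1)), Y ∪ {x | x.val = m - 1 - a}) := by
    intro a ha b hb Y
    refine ⟨hb, ?_⟩
    show Y ∪ {x | x.val = m - 1 - a} = decStep ins elt ⟨a, by omega⟩ Y
    rw [decStep, hins]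
    rw [if_pos (show decide ((⟨a, by omega⟩ : Fin (2*m+1)).val < m) = true by
      simp only [Fin.val_mk, decide_eq_true_eq]; omega)]
    ext x
    simp [Set.mem_setOf_eq, Fin.ext_iff, helt, ha, or_comm]
  -- entering vertex a ≥ m deletes element (if a = m then m-1 else a-m-1)
  have stepDel : ∀ (a : ℕ) (h1 : m ≤ a) (h2 : a ≤ 2*m) (b : Fin (2*m+1)) (hb : P.Adj b ⟨a, by omega⟩)
      (Y : Set (Fin m)),
      decAdj P ins elt (b, Y)
        ((⟨a, by omega⟩ : Fin (2*m+1)),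
          {x ∈ Y | x.val ≠ (if a = m then m - 1 else a - m - 1)}) := by
    intro a h1 h2 b hb Y
    refine ⟨hb, ?_⟩
    show _ = decStep ins elt ⟨a, by omega⟩ Y
    rw [decStep, hins]
    rw [if_neg (show ¬ decide ((⟨a, by omega⟩ : Fin (2*m+1)).val < m) = true by
      simp only [Fin.val_mk, decide_eq_true_eq]; omega)]
    ext x
    have hnlt : ¬ a < m := by omega
    by_cases h : a = m <;>
      simp [Set.mem_setOf_eq, Fin.ext_iff, helt, h, hnlt, and_comm]
  set R := decAdj P ins elt with hRdef
  -- Sweep A: from m rightwards to m+1+j, deleting elements 0..j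
  have sweepA : ∀ (j : ℕ) (hj : j ≤ m - 1) (Y : Set (Fin m)),
      Relation.ReflTransGen R ((⟨m, by omega⟩ : Fin (2*m+1)), Y)
        ((⟨m+1+j, by omega⟩ : Fin (2*m+1)), {x | x ∈ Y ∧ j < x.val}) := by
    intro j
    induction j with
    | zero =>
      intro hj Y
      have h := stepDel (m+1) (by omega) (by omega) ⟨m, by omega⟩
        (adjP m (m+1) (by omega) (by omega) (by omega)) Y
      have e : ({x ∈ Y | x.val ≠ (if m+1 = m then m - 1 else m+1-m-1)} : Set (Fin m))
          = {x | x ∈ Y ∧ 0 < x.val} := by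
        ext x
        rw [if_neg (by omega)]
        simp only [Set.mem_setOf_eq]
        constructor
        · rintro ⟨h1, h2⟩; exact ⟨h1, by omega⟩
        · rintro ⟨h1, h2⟩; exact ⟨h1, by omega⟩
      rw [e] at h
      exact Relation.ReflTransGen.single h
    | succ n ih =>
      intro hj Y
      have prev := ih (by omega) Y
      have h := stepDel (m+1+(n+1)) (by omega) (by omega) ⟨m+1+n, by omega⟩
        (adjP (m+1+n) (m+1+(n+1)) (by omega) (by omega) (by omega))
        {x | x ∈ Y ∧ n < x.val}
      have e : ({x ∈ {x : Fin m | x ∈ Y ∧ n < x.val} | x.val ≠ (if m+1+(n+1) = m then m - 1 else m+1+(n+1)-m-1)} : Set (Fin m))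
          = {x | x ∈ Y ∧ n+1 < x.val} := by
        ext x
        rw [if_neg (by omega)]
        simp only [Set.mem_setOf_eq]
        constructor
        · rintro ⟨⟨h1, h2⟩, h3⟩; exact ⟨h1, by omega⟩
        · rintro ⟨h1, h2⟩; exact ⟨⟨h1, by omega⟩, by omega⟩
      rw [e] at h
      exact Relation.ReflTransGen.tail prev
        (show R ((⟨m+1+n, by omega⟩ : Fin (2*m+1)), {x | x ∈ Y ∧ n < x.val})
          ((⟨m+1+(n+1), by omega⟩ : Fin (2*m+1)), {x | x ∈ Y ∧ n+1 < x.val}) from h)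
  -- Sweep B: from m+1+j leftwards to m, deleting elements j-1,...,0 and then m-1
  have sweepB : ∀ (j : ℕ) (hj : j ≤ m - 1) (Y : Set (Fin m)),
      Relation.ReflTransGen R ((⟨m+1+j, by omega⟩ : Fin (2*m+1)), Y)
        ((⟨m, by omega⟩ : Fin (2*m+1)), {x | x ∈ Y ∧ j ≤ x.val ∧ x.val ≠ m - 1}) := by
    intro j
    induction j with
    | zero =>
      intro hj Y
      have h := stepDel m (by omega) (by omega) ⟨m+1+0, by omega⟩
        (adjP (m+1+0) m (by omega) (by omega) (by omega)) Y
      have e : ({x ∈ Y | x.val ≠ (if m = m then m - 1 else m-m-1)} : Set (Fin m))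
          = {x | x ∈ Y ∧ 0 ≤ x.val ∧ x.val ≠ m - 1} := by
        ext x
        rw [if_pos rfl]
        simp only [Set.mem_setOf_eq]
        exact ⟨fun ⟨h1, h2⟩ => ⟨h1, by omega, h2⟩, fun ⟨h1, _, h2⟩ => ⟨h1, h2⟩⟩
      rw [e] at h
      exact Relation.ReflTransGen.single h
    | succ n ih =>
      intro hj Y
      have h := stepDel (m+1+n) (by omega) (by omega) ⟨m+1+(n+1), by omega⟩
        (adjP (m+1+(n+1)) (m+1+n) (by omega) (by omega) (by omega)) Y
      have e : ({x ∈ Y | x.val ≠ (if m+1+n = m then m - 1 else m+1+n-m-1)} : Set (Fin m))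
          = {x | x ∈ Y ∧ x.val ≠ n} := by
        ext x
        rw [if_neg (by omega)]
        simp only [Set.mem_setOf_eq]
        constructor
        · rintro ⟨h1, h2⟩; exact ⟨h1, by omega⟩
        · rintro ⟨h1, h2⟩; exact ⟨h1, by omega⟩
      rw [e] at h
      have rest := ih (by omega) {x | x ∈ Y ∧ x.val ≠ n}
      have e2 : ({x | x ∈ {x : Fin m | x ∈ Y ∧ x.val ≠ n} ∧ n ≤ x.val ∧ x.val ≠ m - 1} : Set (Fin m))
          = {x | x ∈ Y ∧ n+1 ≤ x.val ∧ x.val ≠ m - 1} := by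
        ext x
        simp only [Set.mem_setOf_eq]
        constructor
        · rintro ⟨⟨h1, h2⟩, h3, h4⟩; exact ⟨h1, by omega, h4⟩
        · rintro ⟨h1, h2, h3⟩; exact ⟨⟨h1, by omega⟩, by omega, h3⟩
      rw [e2] at rest
      exact Relation.ReflTransGen.head h rest
  -- Sweep C: from m leftwards to m-1-j, inserting elements 0..j
  have sweepC : ∀ (j : ℕ) (hj : j ≤ m - 1) (Y : Set (Fin m)),
      Relation.ReflTransGen R ((⟨m, by omega⟩ : Fin (2*m+1)), Y)
        ((⟨m-1-j, by omega⟩ : Fin (2*m+1)), Y ∪ {x | x.val ≤ j}) := by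
    intro j
    induction j with
    | zero =>
      intro hj Y
      have h := stepIns (m-1) (by omega) ⟨m, by omega⟩
        (adjP m (m-1) (by omega) (by omega) (by omega)) Y
      have e : (Y ∪ {x : Fin m | x.val = m - 1 - (m-1)} : Set (Fin m))
          = Y ∪ {x | x.val ≤ 0} := by
        ext x
        simp only [Set.mem_union, Set.mem_setOf_eq]
        constructor
        · rintro (h1 | h2)
          exacts [Or.inl h1, Or.inr (by omega)]
        · rintro (h1 | h2)
          exacts [Or.inl h1, Or.inr (by omega)]
      rw [e] at h
      exact Relation.ReflTransGen.single
        (show R ((⟨m, by omega⟩ : Fin (2*m+1)), Y)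
          ((⟨m-1-0, by omega⟩ : Fin (2*m+1)), Y ∪ {x | x.val ≤ 0}) from h)
    | succ n ih =>
      intro hj Y
      have prev := ih (by omega) Y
      have h := stepIns (m-1-(n+1)) (by omega) ⟨m-1-n, by omega⟩
        (adjP (m-1-n) (m-1-(n+1)) (by omega) (by omega) (by omega))
        (Y ∪ {x | x.val ≤ n})
      have e : ((Y ∪ {x : Fin m | x.val ≤ n}) ∪ {x : Fin m | x.val = m - 1 - (m-1-(n+1))} : Set (Fin m))
          = Y ∪ {x | x.val ≤ n+1} := by
        ext x
        simp only [Set.mem_union, Set.mem_setOf_eq]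
        constructor
        · rintro ((h1 | h2) | h3)
          · exact Or.inl h1
          · exact Or.inr (by omega)
          · exact Or.inr (by omega)
        · rintro (h1 | h2)
          · exact Or.inl (Or.inl h1)
          · by_cases hxn : x.val ≤ n
            · exact Or.inl (Or.inr hxn)
            · exact Or.inr (by omega)
      rw [e] at h
      exact Relation.ReflTransGen.tail prev h
  -- Sweep D: from m-1-j rightwards to m, inserting elements j-1..0 then deleting m-1
  have sweepD : ∀ (j : ℕ) (hj : j ≤ m - 1) (Y : Set (Fin m)),
      Relation.ReflTransGen R ((⟨m-1-j, by omega⟩ : Fin (2*m+1)), Y)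
        ((⟨m, by omega⟩ : Fin (2*m+1)), {x | (x ∈ Y ∨ x.val < j) ∧ x.val ≠ m - 1}) := by
    intro j
    induction j with
    | zero =>
      intro hj Y
      have h := stepDel m (by omega) (by omega) ⟨m-1-0, by omega⟩
        (adjP (m-1-0) m (by omega) (by omega) (by omega)) Y
      have e : ({x ∈ Y | x.val ≠ (if m = m then m - 1 else m-m-1)} : Set (Fin m))
          = {x | (x ∈ Y ∨ x.val < 0) ∧ x.val ≠ m - 1} := by
        ext x
        rw [if_pos rfl]
        simp only [Set.mem_setOf_eq]
        exact ⟨fun ⟨h1, h2⟩ => ⟨Or.inl h1, h2⟩,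
          fun ⟨h1, h2⟩ => ⟨h1.resolve_right (by omega), h2⟩⟩
      rw [e] at h
      exact Relation.ReflTransGen.single h
    | succ n ih =>
      intro hj Y
      have h := stepIns (m-1-n) (by omega) ⟨m-1-(n+1), by omega⟩
        (adjP (m-1-(n+1)) (m-1-n) (by omega) (by omega) (by omega)) Y
      have e : (Y ∪ {x : Fin m | x.val = m - 1 - (m-1-n)} : Set (Fin m))
          = Y ∪ {x | x.val = n} := by
        ext x
        simp only [Set.mem_union, Set.mem_setOf_eq]
        constructor
        · rintro (h1 | h2)
          exacts [Or.inl h1, Or.inr (by omega)]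
        · rintro (h1 | h2)
          exacts [Or.inl h1, Or.inr (by omega)]
      rw [e] at h
      have rest := ih (by omega) (Y ∪ {x | x.val = n})
      have e2 : ({x | (x ∈ Y ∪ {x : Fin m | x.val = n} ∨ x.val < n) ∧ x.val ≠ m - 1} : Set (Fin m))
          = {x | (x ∈ Y ∨ x.val < n+1) ∧ x.val ≠ m - 1} := by
        ext x
        simp only [Set.mem_union, Set.mem_setOf_eq]
        constructor
        · rintro ⟨(h1 | h2) | h3, h4⟩
          · exact ⟨Or.inl h1, h4⟩
          · exact ⟨Or.inr (by omega), h4⟩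
          · exact ⟨Or.inr (by omega), h4⟩
        · rintro ⟨h1 | h2, h4⟩
          · exact ⟨Or.inl (Or.inl h1), h4⟩
          · by_cases hxn : x.val = n
            · exact ⟨Or.inl (Or.inr hxn), h4⟩
            · exact ⟨Or.inr (by omega), h4⟩
      rw [e2] at rest
      exact Relation.ReflTransGen.head h rest
  -- The target set after handling elements j, j+1, ..., m-1
  have main : ∀ (j : ℕ) (hj : j ≤ m - 1) (Y : Set (Fin m)),
      (((⟨j, by omega⟩ : Fin m) ∈ X →
        Relation.ReflTransGen R ((⟨m-1-j, by omega⟩ : Fin (2*m+1)), Y)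
          ((⟨m, by omega⟩ : Fin (2*m+1)),
            {x | (x ∈ Y ∧ j ≤ x.val ∧ x.val ≠ m - 1) ∨ (x ∈ X ∧ x.val < j)})) ∧
       ((⟨j, by omega⟩ : Fin m) ∉ X →
        Relation.ReflTransGen R ((⟨m+1+j, by omega⟩ : Fin (2*m+1)), Y)
          ((⟨m, by omega⟩ : Fin (2*m+1)),
            {x | (x ∈ Y ∧ j ≤ x.val ∧ x.val ≠ m - 1) ∨ (x ∈ X ∧ x.val < j)}))) := by
    intro j
    induction j with
    | zero =>
      intro hj Y
      have e : ∀ c, c = m - 1 →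
          ({x ∈ Y | x.val ≠ c} : Set (Fin m))
          = {x | (x ∈ Y ∧ 0 ≤ x.val ∧ x.val ≠ m - 1) ∨ (x ∈ X ∧ x.val < 0)} := by
        intro c hc
        ext x
        simp only [Set.mem_setOf_eq, hc]
        constructor
        · rintro ⟨h1, h2⟩; exact Or.inl ⟨h1, by omega, h2⟩
        · rintro (⟨h1, _, h2⟩ | ⟨_, h2⟩)
          exacts [⟨h1, h2⟩, by omega]
      constructor
      · intro _
        have h := stepDel m (by omega) (by omega) ⟨m-1-0, by omega⟩
          (adjP (m-1-0) m (by omega) (by omega) (by omega)) Y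
        rw [if_pos rfl, e (m-1) rfl] at h
        exact Relation.ReflTransGen.single h
      · intro _
        have h := stepDel m (by omega) (by omega) ⟨m+1+0, by omega⟩
          (adjP (m+1+0) m (by omega) (by omega) (by omega)) Y
        rw [if_pos rfl, e (m-1) rfl] at h
        exact Relation.ReflTransGen.single h
    | succ n ih =>
      intro hj Y
      have hjm : n + 1 ≤ m - 1 := hj
      have hnm : n ≤ m - 1 := by omega
      by_cases h0 : (⟨n, by omega⟩ : Fin m) ∈ X
      · -- element n ends with an insert: next target is m-1-n
        have hn1 : (n : ℕ) < m - 1 := hX _ h0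
        have hvaln : ∀ x : Fin m, x.val = n → x ∈ X := by
          intro x hx
          have : x = (⟨n, by omega⟩ : Fin m) := Fin.ext hx
          rw [this]; exact h0
        constructor
        · -- from m-1-(n+1): one step right to m-1-n (inserting n), then ih
          intro h1
          have hstep := stepIns (m-1-n) (by omega) ⟨m-1-(n+1), by omega⟩
            (adjP (m-1-(n+1)) (m-1-n) (by omega) (by omega) (by omega)) Y
          have e : (Y ∪ {x : Fin m | x.val = m - 1 - (m-1-n)} : Set (Fin m))
              = Y ∪ {x | x.val = n} := by
            ext x
            simp only [Set.mem_union, Set.mem_setOf_eq]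
            constructor
            · rintro (hh | hh)
              exacts [Or.inl hh, Or.inr (by omega)]
            · rintro (hh | hh)
              exacts [Or.inl hh, Or.inr (by omega)]
          rw [e] at hstep
          have rest := (ih (by omega) (Y ∪ {x | x.val = n})).1 h0
          have e2 : ({x | (x ∈ Y ∪ {x : Fin m | x.val = n} ∧ n ≤ x.val ∧ x.val ≠ m - 1) ∨ (x ∈ X ∧ x.val < n)} : Set (Fin m))
              = {x | (x ∈ Y ∧ n+1 ≤ x.val ∧ x.val ≠ m - 1) ∨ (x ∈ X ∧ x.val < n+1)} := by
            ext x
            simp only [Set.mem_union, Set.mem_setOf_eq]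
            constructor
            · rintro (⟨hh1 | hh1, hh2, hh3⟩ | ⟨hh1, hh2⟩)
              · by_cases hxn : x.val = n
                · exact Or.inr ⟨hvaln x hxn, by omega⟩
                · exact Or.inl ⟨hh1, by omega, hh3⟩
              · exact Or.inr ⟨hvaln x hh1, by omega⟩
              · exact Or.inr ⟨hh1, by omega⟩
            · rintro (⟨hh1, hh2, hh3⟩ | ⟨hh1, hh2⟩)
              · exact Or.inl ⟨Or.inl hh1, by omega, hh3⟩
              · by_cases hxn : x.val = n
                · exact Or.inl ⟨Or.inr hxn, by omega, by omega⟩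
                · exact Or.inr ⟨hh1, by omega⟩
          rw [e2] at rest
          exact Relation.ReflTransGen.head hstep rest
        · -- from m+1+(n+1): sweep B(n+1) to m, then sweep C(n) to m-1-n, then ih
          intro h1
          have hB := sweepB (n+1) hjm Y
          have hCs := sweepC n hnm {x | x ∈ Y ∧ n+1 ≤ x.val ∧ x.val ≠ m - 1}
          have rest := (ih (by omega)
            ({x | x ∈ Y ∧ n+1 ≤ x.val ∧ x.val ≠ m - 1} ∪ {x | x.val ≤ n})).1 h0
          have e2 : ({x | (x ∈ {x : Fin m | x ∈ Y ∧ n+1 ≤ x.val ∧ x.val ≠ m - 1} ∪ {x : Fin m | x.val ≤ n} ∧ n ≤ x.val ∧ x.val ≠ m - 1) ∨ (x ∈ X ∧ x.val < n)} : Set (Fin m))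
              = {x | (x ∈ Y ∧ n+1 ≤ x.val ∧ x.val ≠ m - 1) ∨ (x ∈ X ∧ x.val < n+1)} := by
            ext x
            simp only [Set.mem_union, Set.mem_setOf_eq]
            constructor
            · rintro (⟨⟨hh1, hh2, hh3⟩ | hh1, hh4, hh5⟩ | ⟨hh1, hh2⟩)
              · exact Or.inl ⟨hh1, hh2, hh3⟩
              · exact Or.inr ⟨hvaln x (by omega), by omega⟩
              · exact Or.inr ⟨hh1, by omega⟩
            · rintro (⟨hh1, hh2, hh3⟩ | ⟨hh1, hh2⟩)
              · exact Or.inl ⟨Or.inl ⟨hh1, hh2, hh3⟩, by omega, hh3⟩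
              · by_cases hxn : x.val = n
                · exact Or.inl ⟨Or.inr (by omega), by omega, by omega⟩
                · exact Or.inr ⟨hh1, by omega⟩
          rw [e2] at rest
          exact (hB.trans hCs).trans rest
      · -- element n ends with a delete: next target is m+1+n
        have hvaln : ∀ x : Fin m, x.val = n → x ∉ X := by
          intro x hx hmem
          exact h0 (by rwa [show (⟨n, by omega⟩ : Fin m) = x from (Fin.ext hx).symm])
        constructor
        · -- from m-1-(n+1): sweep D(n+1) to m, then sweep A(n) to m+1+n, then ih
          intro h1
          have hD := sweepD (n+1) hjm Y
          have hA := sweepA n hnm {x | (x ∈ Y ∨ x.val < n+1) ∧ x.val ≠ m - 1}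
          have rest := (ih (by omega)
            {x | x ∈ {x : Fin m | (x ∈ Y ∨ x.val < n+1) ∧ x.val ≠ m - 1} ∧ n < x.val}).2 h0
          have e2 : ({x | (x ∈ {x | x ∈ {x : Fin m | (x ∈ Y ∨ x.val < n+1) ∧ x.val ≠ m - 1} ∧ n < x.val} ∧ n ≤ x.val ∧ x.val ≠ m - 1) ∨ (x ∈ X ∧ x.val < n)} : Set (Fin m))
              = {x | (x ∈ Y ∧ n+1 ≤ x.val ∧ x.val ≠ m - 1) ∨ (x ∈ X ∧ x.val < n+1)} := by
            ext x
            simp only [Set.mem_setOf_eq]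
            constructor
            · rintro (⟨⟨⟨hh1 | hh1, hh2⟩, hh3⟩, hh4, hh5⟩ | ⟨hh1, hh2⟩)
              · exact Or.inl ⟨hh1, by omega, hh2⟩
              · omega
              · exact Or.inr ⟨hh1, by omega⟩
            · rintro (⟨hh1, hh2, hh3⟩ | ⟨hh1, hh2⟩)
              · exact Or.inl ⟨⟨⟨Or.inl hh1, hh3⟩, by omega⟩, by omega, hh3⟩
              · have hxn : x.val ≠ n := fun hh => hvaln x hh hh1
                exact Or.inr ⟨hh1, by omega⟩
          rw [e2] at rest
          exact (hD.trans hA).trans rest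
        · -- from m+1+(n+1): one step left to m+1+n (deleting n), then ih
          intro h1
          have hstep := stepDel (m+1+n) (by omega) (by omega) ⟨m+1+(n+1), by omega⟩
            (adjP (m+1+(n+1)) (m+1+n) (by omega) (by omega) (by omega)) Y
          have e : ({x ∈ Y | x.val ≠ (if m+1+n = m then m - 1 else m+1+n-m-1)} : Set (Fin m))
              = {x | x ∈ Y ∧ x.val ≠ n} := by
            ext x
            rw [if_neg (by omega)]
            simp only [Set.mem_setOf_eq]
            constructor
            · rintro ⟨hh1, hh2⟩; exact ⟨hh1, by omega⟩
            · rintro ⟨hh1, hh2⟩; exact ⟨hh1, by omega⟩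
          rw [e] at hstep
          have rest := (ih (by omega) {x | x ∈ Y ∧ x.val ≠ n}).2 h0
          have e2 : ({x | (x ∈ {x : Fin m | x ∈ Y ∧ x.val ≠ n} ∧ n ≤ x.val ∧ x.val ≠ m - 1) ∨ (x ∈ X ∧ x.val < n)} : Set (Fin m))
              = {x | (x ∈ Y ∧ n+1 ≤ x.val ∧ x.val ≠ m - 1) ∨ (x ∈ X ∧ x.val < n+1)} := by
            ext x
            simp only [Set.mem_setOf_eq]
            constructor
            · rintro (⟨⟨hh1, hh2⟩, hh3, hh4⟩ | ⟨hh1, hh2⟩)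
              · exact Or.inl ⟨hh1, by omega, hh4⟩
              · exact Or.inr ⟨hh1, by omega⟩
            · rintro (⟨hh1, hh2, hh3⟩ | ⟨hh1, hh2⟩)
              · exact Or.inl ⟨⟨hh1, by omega⟩, by omega, hh3⟩
              · have hxn : x.val ≠ n := fun hh => hvaln x hh hh1
                exact Or.inr ⟨hh1, by omega⟩
          rw [e2] at rest
          exact Relation.ReflTransGen.head hstep rest
  -- assemble
  obtain ⟨⟨p, hp⟩, hconn, hclosed⟩ := hC
  have hm1X : (⟨m - 1, by omega⟩ : Fin m) ∉ X := by
    intro h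
    have := hX _ h
    simp only [Fin.val_mk] at this
    omega
  have toM : ∃ Z : Set (Fin m),
      Relation.ReflTransGen R p ((⟨m, by omega⟩ : Fin (2*m+1)), Z) := by
    rcases lt_trichotomy p.1.val m with hk | hk | hk
    · have h := sweepD (m - 1 - p.1.val) (by omega) p.2
      have hst : (⟨m-1-(m-1-p.1.val), by omega⟩ : Fin (2*m+1)) = p.1 := by
        apply Fin.ext; simp only [Fin.val_mk]; omega
      rw [hst] at h
      exact ⟨_, h⟩
    · refine ⟨p.2, ?_⟩
      have hst : (⟨m, by omega⟩ : Fin (2*m+1)) = p.1 := by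
        apply Fin.ext; simp only [Fin.val_mk]; omega
      rw [hst]
    · have h := sweepB (p.1.val - m - 1) (by omega) p.2
      have hst : (⟨m+1+(p.1.val - m - 1), by omega⟩ : Fin (2*m+1)) = p.1 := by
        apply Fin.ext; simp only [Fin.val_mk]; omega
      rw [hst] at h
      exact ⟨_, h⟩
  obtain ⟨Z, hZ⟩ := toM
  have hA := sweepA (m-1) (le_refl _) Z
  have hmain := (main (m-1) (le_refl _) {x | x ∈ Z ∧ m-1 < x.val}).2 hm1X
  have eX : ({x | (x ∈ {x : Fin m | x ∈ Z ∧ m-1 < x.val} ∧ m-1 ≤ x.val ∧ x.val ≠ m-1)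
      ∨ (x ∈ X ∧ x.val < m-1)} : Set (Fin m)) = X := by
    ext x
    simp only [Set.mem_setOf_eq]
    constructor
    · rintro (⟨⟨_, h2⟩, h3, h4⟩ | ⟨h1, _⟩)
      · have := x.isLt; omega
      · exact h1
    · intro hx
      exact Or.inr ⟨hx, hX x hx⟩
  rw [eX] at hmain
  have hvm : v = (⟨m, by omega⟩ : Fin (2*m+1)) := by
    apply Fin.ext; simp only [Fin.val_mk]; omega
  have final : Relation.ReflTransGen R p (v, X) := by
    rw [hvm]
    exact (hZ.trans hA).trans hmain
  exact hclosed p hp _ final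
end

section
/- Let m ≥ 2 and let P be the event graph that is a path on 2m+1 vertices whose labels, in order along the path, are 'i m', 'i (m-1)', ..., 'i 1', 'd m', 'd 1', 'd 2', ..., 'd m', let v denote the middle vertex (labeled 'd m'), and let Y = {2k+1 : k = 0, ..., ⌊m/2⌋ - 1} be the set of odd numbers between 1 and m-1. Then every certifying walk for the node (v, Y) has length at least (m-1)^2 edges; hence shortest certifying walks can require Ω(n^2) nodes on event graphs with n nodes. -/

lemma walk_lip (f : ℕ → ℕ) (n : ℕ)
    (hstep : ∀ i, i + 1 < n → (f (i+1) = f i + 1 ∨ f i = f (i+1) + 1)) :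
    ∀ d i, i + d < n → f (i + d) ≤ f i + d ∧ f i ≤ f (i + d) + d := by
  intro d
  induction d with
  | zero => intro i h; simp only [Nat.add_zero]; omega
  | succ d ih =>
    intro i h
    have h1 := ih (i+1) (by omega)
    have h2 := hstep i (by omega)
    have he : i + 1 + d = i + (d + 1) := by omega
    rw [he] at h1
    omega

lemma walk_ivt (f : ℕ → ℕ) (n : ℕ)
    (hstep : ∀ i, i + 1 < n → (f (i+1) = f i + 1 ∨ f i = f (i+1) + 1)) :
    ∀ d i, i + d < n → ∀ c, ((f i ≤ c ∧ c ≤ f (i+d)) ∨ (f (i+d) ≤ c ∧ c ≤ f i)) →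
      ∃ k, k ≤ d ∧ f (i + k) = c := by
  intro d
  induction d with
  | zero => intro i h c hc; simp only [Nat.add_zero] at hc ⊢; exact ⟨0, le_refl 0, by simp only [Nat.add_zero]; omega⟩
  | succ d ih =>
    intro i h c hc
    have hs := hstep (i + d) (by omega)
    have h3 : f (i + (d+1)) = f (i + d + 1) := rfl
    rw [h3] at hc
    by_cases hcd : (f i ≤ c ∧ c ≤ f (i+d)) ∨ (f (i+d) ≤ c ∧ c ≤ f i)
    · obtain ⟨k, hk, hkc⟩ := ih i (by omega) c hcd
      exact ⟨k, by omega, hkc⟩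
    · refine ⟨d+1, le_refl _, ?_⟩
      rw [h3]
      omega

/-- Lower bound example: `P` is a path on `2m+1` vertices labeled, in order,
`i m, i (m-1), …, i 1, d m, d 1, d 2, …, d m` (the universe `{1, …, m}` is modeled as
`Fin m`, with `j : Fin m` standing for the element `j + 1`), `v` is the middle vertex,
and `Y = {1, 3, 5, …} ∩ {1, …, m-1}` is the set of odd elements below `m` (i.e. the
elements `2k+1` for `k = 0, …, ⌊m/2⌋ - 1`). Every certifying walk for `(v, Y)` has at
least `(m-1)^2` edges, i.e. at least `(m-1)^2 + 1` nodes counted with repetition. -/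
theorem stmt_8 (m : ℕ) (hm : 2 ≤ m)
    (P : SimpleGraph (Fin (2 * m + 1)))
    (hP : ∀ a b : Fin (2 * m + 1), P.Adj a b ↔ (a.val + 1 = b.val ∨ b.val + 1 = a.val))
    (ins : Fin (2 * m + 1) → Bool) (hins : ∀ a, ins a = decide (a.val < m))
    (elt : Fin (2 * m + 1) → Fin m)
    (helt : ∀ a, (elt a).val =
      if a.val < m then m - 1 - a.val else if a.val = m then m - 1 else a.val - m - 1)
    (v : Fin (2 * m + 1)) (hv : v.val = m)
    (Y : Set (Fin m)) (hY : ∀ x : Fin m, x ∈ Y ↔ (x.val % 2 = 0 ∧ x.val < m - 1))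
    (W : List (Fin (2 * m + 1))) (hW : IsCertifyingWalk P ins elt v Y W) :
    (m - 1) ^ 2 + 1 ≤ W.length := by
  obtain ⟨b, rfl⟩ : ∃ b, m = b + 2 := ⟨m - 2, by omega⟩
  obtain ⟨hne, hchain, hhead, hlast, hcert⟩ := hW
  set n := W.length with hn
  have hn1 : 1 ≤ n := List.length_pos_iff.mpr hne
  -- position function
  set N : ℕ → ℕ := fun i => (W.getD i v).val with hN
  have hN0 : N 0 = b + 2 := by
    have h1 : W[0]? = some v := by rw [← List.head?_eq_getElem?]; exact hhead
    have h2 : W.getD 0 v = v := by rw [List.getD_eq_getElem?_getD, h1]; rfl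
    simp only [hN, h2, hv]
  have hNlast : N (n - 1) = b + 2 := by
    have h1 : W[n - 1]? = some v := by rw [hn, ← List.getLast?_eq_getElem?]; exact hlast
    have h2 : W.getD (n - 1) v = v := by rw [List.getD_eq_getElem?_getD, h1]; rfl
    simp only [hN, h2, hv]
  -- steps are ±1
  have hstep : ∀ i, i + 1 < n → (N (i+1) = N i + 1 ∨ N i = N (i+1) + 1) := by
    intro i hi
    rw [show W.Chain' P.Adj ↔ W.IsChain P.Adj from Iff.rfl, List.isChain_iff_getElem] at hchain
    have ha := hchain i (by omega)
    rw [hP] at ha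
    have e1 : W.getD i v = W[i] := List.getD_eq_getElem W v (by omega)
    have e2 : W.getD (i+1) v = W[i+1] := List.getD_eq_getElem W v (by omega)
    simp only [hN, e1, e2]
    omega
  have hlip := walk_lip N n hstep
  have hivt := walk_ivt N n hstep
  -- extraction of last-occurrence times
  have key : ∀ x : ℕ, ∃ t : ℕ, x ≤ b → (t < n ∧
      N t = (if x % 2 = 0 then b + 1 - x else b + 3 + x) ∧
      ∀ s, t < s → s < n → ((elt (W.getD s v)).val ≠ x)) := by
    intro x
    by_cases hx : x ≤ b
    · obtain ⟨W₁, w, W₂, hsplit, hwx, hafter, hiff⟩ := hcert ⟨x, by omega⟩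
      refine ⟨W₁.length, fun _ => ?_⟩
      have hlen : n = W₁.length + W₂.length + 1 := by
        rw [hn, hsplit]; simp only [List.length_append, List.length_cons]; omega
      have hget : W.getD W₁.length v = w := by
        rw [hsplit, List.getD_append_right _ _ _ _ (le_refl _), Nat.sub_self,
          List.getD_cons_zero]
      refine ⟨by omega, ?_, ?_⟩
      · -- value of the last node
        have hwval : (elt w).val = x := by rw [hwx]
        have hy := hY ⟨x, by omega⟩
        simp only [Fin.val_mk] at hy
        have hival : ins w = true ↔ (x % 2 = 0 ∧ x < b + 2 - 1) := hiff.symm.trans hy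
        rw [hins w, decide_eq_true_eq] at hival
        have hw2m : w.val < 2 * (b+2) + 1 := w.isLt
        have hev := helt w
        simp only [hN, hget]
        by_cases hpar : x % 2 = 0
        · rw [if_pos hpar]
          have hwlt : w.val < b + 2 := hival.mpr ⟨hpar, by omega⟩
          rw [if_pos hwlt] at hev
          omega
        · rw [if_neg hpar]
          have hwge : ¬ (w.val < b + 2) := fun hc => hpar (hival.mp hc).1
          rw [if_neg hwge] at hev
          by_cases hwm : w.val = b + 2
          · rw [if_pos hwm] at hev; omega
          · rw [if_neg hwm] at hev; omega
      · -- nothing later refers to x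
        intro s hs1 hs2 hcon
        have hsW2 : W.getD s v ∈ W₂ := by
          have hj : s - W₁.length = (s - W₁.length - 1) + 1 := by omega
          rw [hsplit, List.getD_append_right _ _ _ _ (by omega), hj, List.getD_cons_succ]
          rw [List.getD_eq_getElem _ _ (by omega)]
          exact List.getElem_mem _
        exact hafter _ hsW2 (Fin.ext (by simpa using hcon))
    · exact ⟨0, fun h => absurd h hx⟩
  choose T hT using key
  -- confinement after the last occurrence
  have conf : ∀ x, x ≤ b → ∀ s, T x < s → s < n →
      (b + 2) - (x + 1) < N s ∧ N s < (b + 2) + (x + 1) := by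
    intro x hx s hs1 hs2
    obtain ⟨htn, hpos, haft⟩ := hT x hx
    have helt' : ∀ k, k < n → N k = b + 3 + x ∨ N k = b + 1 - x → (elt (W.getD k v)).val = x := by
      intro k hk hkv
      have hev := helt (W.getD k v)
      rcases hkv with hkv | hkv
      · rw [if_neg (by simp only [hN] at hkv; omega), if_neg (by simp only [hN] at hkv; omega)] at hev
        simp only [hN] at hkv
        omega
      · rw [if_pos (by simp only [hN] at hkv; omega)] at hev
        simp only [hN] at hkv
        omega
    constructor
    · by_contra hcon
      push_neg at hcon
      have hd : s + (n - 1 - s) = n - 1 := by omega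
      have ⟨k, hk, hkc⟩ := hivt (n - 1 - s) s (by omega) (b + 1 - x) (by rw [hd, hNlast]; omega)
      exact haft (s + k) (by omega) (by omega) (helt' (s + k) (by omega) (Or.inr hkc))
    · by_contra hcon
      push_neg at hcon
      have hd : s + (n - 1 - s) = n - 1 := by omega
      have ⟨k, hk, hkc⟩ := hivt (n - 1 - s) s (by omega) (b + 3 + x) (by rw [hd, hNlast]; omega)
      exact haft (s + k) (by omega) (by omega) (helt' (s + k) (by omega) (Or.inl hkc))
  -- ordering and gap between consecutive last-occurrence times
  have hgap : ∀ x, x + 1 ≤ b → T (x + 1) + (2 * x + 3) ≤ T x := by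
    intro x hx
    obtain ⟨ht1, hp1, -⟩ := hT x (by omega)
    obtain ⟨ht2, hp2, -⟩ := hT (x + 1) (by omega)
    have hpar : (x + 1) % 2 = 0 ↔ ¬ (x % 2 = 0) := by omega
    have horder : T (x + 1) < T x := by
      by_contra hcon
      push_neg at hcon
      rcases Nat.lt_or_ge (T x) (T (x+1)) with hlt | hge
      · have := conf x (by omega) (T (x+1)) hlt ht2
        by_cases h0 : x % 2 = 0
        · rw [if_neg (by omega)] at hp2; omega
        · rw [if_pos (by omega)] at hp2; omega
      · have heq : T x = T (x + 1) := by omega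
        rw [heq, hp2] at hp1
        by_cases h0 : x % 2 = 0
        · rw [if_pos h0, if_neg (by omega)] at hp1; omega
        · rw [if_neg h0, if_pos (by omega)] at hp1; omega
    have hd : T (x+1) + (T x - T (x+1)) = T x := by omega
    have hl := hlip (T x - T (x+1)) (T (x+1)) (by omega)
    rw [hd] at hl
    by_cases h0 : x % 2 = 0
    · rw [if_pos h0] at hp1; rw [if_neg (by omega)] at hp2; omega
    · rw [if_neg h0] at hp1; rw [if_pos (by omega)] at hp2; omega
  -- base case: reaching depth b+1 takes at least b+1 steps
  have hbase : b + 1 ≤ T b := by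
    obtain ⟨ht, hp, -⟩ := hT b (le_refl b)
    have hd : 0 + T b = T b := by omega
    have hl := hlip (T b) 0 (by omega)
    rw [hd] at hl
    rw [hN0] at hl
    by_cases h0 : b % 2 = 0
    · rw [if_pos h0] at hp; omega
    · rw [if_neg h0] at hp; omega
  -- main downward induction
  have main : ∀ k, k ≤ b → (b + 2) * (b + 1) ≤ T (b - k) + (b + 1 - k) ^ 2 := by
    intro k
    induction k with
    | zero =>
      intro _
      simp only [Nat.sub_zero]
      have : (b + 2) * (b + 1) = (b + 1) ^ 2 + (b + 1) := by ring
      omega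
    | succ k ih =>
      intro hk
      obtain ⟨c, hc⟩ : ∃ c, b - k = c + 1 := ⟨b - k - 1, by omega⟩
      have h1 : b - (k + 1) = c := by omega
      have h2 : b + 1 - (k + 1) = c + 1 := by omega
      have h3 : b + 1 - k = c + 2 := by omega
      have ihk := ih (by omega)
      rw [hc, h3] at ihk
      rw [h1, h2]
      have hg := hgap c (by omega)
      have : (c + 2) ^ 2 = (c + 1) ^ 2 + (2 * c + 3) := by ring
      omega
  have hmain := main b (le_refl b)
  rw [Nat.sub_self] at hmain
  -- endgame
  obtain ⟨ht0, hp0, -⟩ := hT 0 (by omega)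
  rw [if_pos (by omega)] at hp0
  have hne0 : T 0 ≠ n - 1 := by
    intro he
    rw [he, hNlast] at hp0
    omega
  have hfin : (b + 1) ^ 2 + (b + 1) = (b + 2) * (b + 1) := by ring
  have hbn : b + 1 - b = 1 := by omega
  rw [hbn] at hmain
  show (b + 2 - 1) ^ 2 + 1 ≤ n
  have hb1 : b + 2 - 1 = b + 1 := by omega
  rw [hb1]
  omega
end

section
/- Let m ≥ 3 and let P be the event graph that is a path on 2m+1 vertices whose labels, in order along the path, are 'i m', 'i (m-1)', ..., 'i 1', 'd m', 'd 1', 'd 2', ..., 'd m', let v denote the middle vertex (labeled 'd m'), and let Y = {2k+1 : k = 0, ..., ⌊m/2⌋ - 1}. Then every directed walk in dec(P) from (v, ∅) to (v, Y) has length at least (m-2)^2 edges; hence the diameter of the unique sink component of the decorated graph can be Ω(n^2) for event graphs on n nodes. -/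
lemma walk_lipschitz (f : ℕ → ℕ) (N : ℕ)
    (hstep : ∀ i, i < N → (f (i+1) = f i + 1 ∨ f i = f (i+1) + 1)) (i : ℕ) :
    ∀ j, i ≤ j → j ≤ N → f j ≤ f i + (j - i) ∧ f i ≤ f j + (j - i) := by
  intro j
  induction j with
  | zero =>
    intro h1 _
    obtain rfl : i = 0 := by omega
    omega
  | succ j ih =>
    intro h1 h2
    by_cases hij : i = j + 1
    · rw [hij]; omega
    · have h3 := ih (by omega) (by omega)
      have h4 := hstep j (by omega)
      omega

lemma walk_ivt_up (f : ℕ → ℕ) (N : ℕ)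
    (hstep : ∀ i, i < N → (f (i+1) = f i + 1 ∨ f i = f (i+1) + 1)) (i : ℕ) :
    ∀ j, i ≤ j → j ≤ N → ∀ b, f i ≤ b → b ≤ f j → ∃ k, i ≤ k ∧ k ≤ j ∧ f k = b := by
  intro j
  induction j with
  | zero =>
    intro h1 _ b hb1 hb2
    have : i = 0 := by omega
    subst this
    exact ⟨0, le_refl _, le_refl _, by omega⟩
  | succ j ih =>
    intro h1 h2 b hb1 hb2
    by_cases hij : i = j + 1
    · refine ⟨j+1, by omega, le_refl _, ?_⟩
      rw [hij] at hb1; omega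
    · rcases le_or_gt b (f j) with h | h
      · obtain ⟨k, hk1, hk2, hk3⟩ := ih (by omega) (by omega) b hb1 h
        exact ⟨k, hk1, by omega, hk3⟩
      · have h4 := hstep j (by omega)
        exact ⟨j+1, by omega, le_refl _, by omega⟩

lemma walk_ivt_down (f : ℕ → ℕ) (N : ℕ)
    (hstep : ∀ i, i < N → (f (i+1) = f i + 1 ∨ f i = f (i+1) + 1)) (i : ℕ) :
    ∀ j, i ≤ j → j ≤ N → ∀ b, f j ≤ b → b ≤ f i → ∃ k, i ≤ k ∧ k ≤ j ∧ f k = b := by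
  intro j
  induction j with
  | zero =>
    intro h1 _ b hb1 hb2
    have : i = 0 := by omega
    subst this
    exact ⟨0, le_refl _, le_refl _, by omega⟩
  | succ j ih =>
    intro h1 h2 b hb1 hb2
    by_cases hij : i = j + 1
    · refine ⟨j+1, by omega, le_refl _, ?_⟩
      rw [hij] at hb2; omega
    · rcases le_or_gt (f j) b with h | h
      · obtain ⟨k, hk1, hk2, hk3⟩ := ih (by omega) (by omega) b h hb2
        exact ⟨k, hk1, by omega, hk3⟩
      · have h4 := hstep j (by omega)
        exact ⟨j+1, by omega, le_refl _, by omega⟩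

lemma final_char {U : Type*} (insb : ℕ → Bool) (eltf : ℕ → U) (S : ℕ → Set U)
    (h0 : S 0 = ∅) :
    ∀ N, (∀ i, i < N →
        S (i+1) = if insb (i+1) = true then S i ∪ {eltf (i+1)} else S i \ {eltf (i+1)}) →
    ∀ x, (x ∈ S N ↔ ∃ i, 1 ≤ i ∧ i ≤ N ∧ eltf i = x ∧ insb i = true ∧
      ∀ j, i < j → j ≤ N → eltf j ≠ x) := by
  intro N
  induction N with
  | zero =>
    intro _ x
    simp only [h0, Set.mem_empty_iff_false, false_iff]
    rintro ⟨i, h1, h2, -⟩; omega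
  | succ N ih =>
    intro hstep x
    have hS := hstep N (by omega)
    have ihx := ih (fun i hi => hstep i (by omega)) x
    by_cases he : eltf (N+1) = x
    · by_cases hi : insb (N+1) = true
      · constructor
        · intro _
          exact ⟨N+1, by omega, le_refl _, he, hi, fun j hj hj' => by omega⟩
        · intro _
          rw [hS, if_pos hi]
          right; exact he.symm
      · constructor
        · intro hx
          rw [hS, if_neg hi] at hx
          exact absurd he.symm hx.2
        · rintro ⟨i, h1, h2, h3, h4, h5⟩
          by_cases hiN : i = N + 1
          · subst hiN; exact absurd h4 hi
          · exact absurd he (h5 (N+1) (by omega) (le_refl _))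
    · have hmem : x ∈ S (N+1) ↔ x ∈ S N := by
        rw [hS]
        split
        · simp [Ne.symm he]
        · simp [Ne.symm he]
      rw [hmem, ihx]
      constructor
      · rintro ⟨i, h1, h2, h3, h4, h5⟩
        refine ⟨i, h1, by omega, h3, h4, fun j hj hj' => ?_⟩
        by_cases hjN : j = N + 1
        · subst hjN; exact he
        · exact h5 j hj (by omega)
      · rintro ⟨i, h1, h2, h3, h4, h5⟩
        have hiN : i ≠ N + 1 := by rintro rfl; exact he h3
        exact ⟨i, h1, by omega, h3, h4, fun j hj hj' => h5 j hj (by omega)⟩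

lemma key_bound (m N : ℕ) (hm : 3 ≤ m) (f : ℕ → ℕ)
    (hstep : ∀ i, i < N → (f (i+1) = f i + 1 ∨ f i = f (i+1) + 1))
    (h0 : f 0 = m) (hN : f N = m)
    (hins : ∀ c, c < m - 1 → c % 2 = 0 → ∃ i, 1 ≤ i ∧ i ≤ N ∧ f i = m - 1 - c ∧
      ∀ j, i < j → j ≤ N → f j ≠ m - 1 - c ∧ f j ≠ m + 1 + c)
    (hdel : ∀ c, c < m - 1 → c % 2 = 1 → ∀ i, 1 ≤ i → i ≤ N → f i = m - 1 - c →
      ∃ j, i < j ∧ j ≤ N ∧ (f j = m - 1 - c ∨ f j = m + 1 + c)) :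
    (m - 2) ^ 2 ≤ N := by
  classical
  obtain ⟨K, hK⟩ : ∃ K, K = (m - 2) / 2 := ⟨_, rfl⟩
  have h2K : 2 * K ≤ m - 2 ∧ m - 2 ≤ 2 * K + 1 := by omega
  obtain ⟨g, hg0, hgs⟩ : ∃ g : ℕ → ℕ, g 0 = 1 ∧ ∀ k, g (k + 1) = g k + 8 * (K - k) :=
    ⟨fun k => Nat.rec 1 (fun k gk => gk + 8 * (K - k)) k, rfl, fun k => rfl⟩
  -- main induction
  have A : ∀ k, k ≤ K → ∃ t, 1 ≤ t ∧ t ≤ N ∧ f t = m - 1 - 2 * (K - k) ∧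
      (∀ j, t < j → j ≤ N → f j ≠ m - 1 - 2 * (K - k) ∧ f j ≠ m + 1 + 2 * (K - k)) ∧
      g k ≤ t := by
    intro k
    induction k with
    | zero =>
      intro _
      have hlt : 2 * (K - 0) < m - 1 := by omega
      have hev : (2 * (K - 0)) % 2 = 0 := by omega
      have h' := hins (2 * (K - 0)) hlt hev
      obtain ⟨t, h1, h2, h3, h4⟩ := h'
      exact ⟨t, h1, h2, h3, h4, hg0 ▸ h1⟩
    | succ k ih =>
      intro hk1
      have hkK : k ≤ K := by omega
      have ih' := ih hkK
      obtain ⟨t', ht'1, ht'N, hft', hlate', hbound'⟩ := ih'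
      have hd0 : K = k + (K - k - 1) + 1 := by omega
      obtain ⟨d, hd⟩ : ∃ d, K = k + d + 1 := ⟨K - k - 1, hd0⟩
      have hcm : 2 * d + 4 ≤ m := by clear hft' hlate' hbound' ht'1 ht'N; omega
      have hKk1 : K - (k + 1) = d := by omega
      have hKk : K - k = d + 1 := by omega
      rw [hKk] at hft' hlate'
      -- f t' = m - 1 - (2d + 2) = m - 3 - 2d; find a later visit to m - 2 - 2d
      have hb1 : f t' ≤ m - 2 - 2 * d := by omega
      have hb2 : m - 2 - 2 * d ≤ f N := by omega
      have hivt := walk_ivt_up f N hstep t' N ht'N (le_refl N) (m - 2 - 2 * d) hb1 hb2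
      obtain ⟨k₀, hk₀1, hk₀2, hk₀3⟩ := hivt
      set s₁ := Nat.findGreatest (fun j => f j = m - 2 - 2 * d) N with hs₁def
      have hs₁spec : f s₁ = m - 2 - 2 * d :=
        Nat.findGreatest_spec (P := fun j => f j = m - 2 - 2 * d) hk₀2 hk₀3
      have hs₁le : s₁ ≤ N := Nat.findGreatest_le N
      have hs₁ge : k₀ ≤ s₁ := Nat.le_findGreatest (P := fun j => f j = m - 2 - 2 * d) hk₀2 hk₀3
      have hs₁max : ∀ j, s₁ < j → j ≤ N → f j ≠ m - 2 - 2 * d :=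
        fun j h1 h2 => Nat.findGreatest_is_greatest (P := fun j => f j = m - 2 - 2 * d) h1 h2
      have hs₁t' : t' < s₁ := by
        rcases Nat.lt_or_ge t' s₁ with h | h
        · exact h
        · exfalso
          have : t' = s₁ ∨ s₁ < t' := by omega
          rcases this with h' | h'
          · rw [h'] at hft'; omega
          · omega
      have hs₁1 : 1 ≤ s₁ := by
        rcases Nat.eq_zero_or_pos s₁ with h | h
        · rw [h] at hs₁spec; omega
        · exact h
      -- deletion of the odd element 2d+1
      have hodd : (2 * d + 1) % 2 = 1 := by omega
      have hlt2 : 2 * d + 1 < m - 1 := by omega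
      have heq : m - 1 - (2 * d + 1) = m - 2 - 2 * d := by omega
      have hfs₁' : f s₁ = m - 1 - (2 * d + 1) := by rw [heq]; exact hs₁spec
      have hdel' := hdel (2 * d + 1) hlt2 hodd s₁ hs₁1 hs₁le hfs₁'
      obtain ⟨s, hs1, hs2, hs3⟩ := hdel'
      rw [heq] at hs3
      have hfs : f s = m + 1 + (2 * d + 1) := by
        rcases hs3 with h | h
        · exact absurd h (hs₁max s hs1 hs2)
        · exact h
      -- the new insert index t for element 2d
      have hlt3 : 2 * d < m - 1 := by omega
      have hev3 : (2 * d) % 2 = 0 := by omega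
      have hins' := hins (2 * d) hlt3 hev3
      obtain ⟨t, ht1, htN, hft, hlate⟩ := hins'
      have hst : s < t := by
        rcases Nat.lt_or_ge s t with h | h
        · exact h
        · exfalso
          have hts : t < s := by
            rcases Nat.eq_or_lt_of_le h with h' | h'
            · rw [h'] at hft; omega
            · exact h'
          have hb3 : f N ≤ m + 1 + 2 * d := by omega
          have hb4 : m + 1 + 2 * d ≤ f s := by omega
          have hivt2 := walk_ivt_down f N hstep s N hs2 (le_refl N) (m + 1 + 2 * d) hb3 hb4
          obtain ⟨k₁, hk₁1, hk₁2, hk₁3⟩ := hivt2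
          have hk₁t : t < k₁ := by omega
          exact (hlate k₁ hk₁t hk₁2).2 hk₁3
      -- Lipschitz gaps
      have hles1 : t' ≤ s₁ := by omega
      have hles2 : s₁ ≤ s := by omega
      have hles3 : s ≤ t := by omega
      have g1 := walk_lipschitz f N hstep t' s₁ hles1 hs₁le
      have g2 := walk_lipschitz f N hstep s₁ s hles2 hs2
      have g3 := walk_lipschitz f N hstep s t hles3 htN
      have hgk := hgs k
      refine ⟨t, ht1, htN, by rw [hKk1]; exact hft, by rw [hKk1]; exact hlate, by omega⟩
  obtain ⟨t, ht1, htN, hft, hlate, hbound⟩ := A K (le_refl _)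
  have hftv : f t = m - 1 := by rw [Nat.sub_self] at hft; simpa using hft
  have htltN : t < N := by
    rcases Nat.eq_or_lt_of_le htN with h | h
    · exfalso; rw [h, hN] at hftv; omega
    · exact h
  -- quadratic growth of g
  have hgK : ∀ k, k ≤ K → 8 * K * k + 4 * k + 1 ≤ g k + 4 * (k * k) := by
    intro k
    induction k with
    | zero => intro _; simp [hg0]
    | succ k ih =>
      intro hk1
      have ih' := ih (by omega)
      have hgk := hgs k
      have e1 : 8 * K * (k + 1) = 8 * K * k + 8 * K := by ring
      have e2 : (k + 1) * (k + 1) = k * k + 2 * k + 1 := by ring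
      have e4 : K - k + k = K := by omega
      linarith [ih', hgk, e1, e2, e4]
  have hKK := hgK K (le_refl _)
  have hfin : 4 * (K * K) + 4 * K + 2 ≤ N := by linarith [hKK, hbound, htltN]
  rcases (by omega : m - 2 = 2 * K ∨ m - 2 = 2 * K + 1) with h | h <;> rw [h]
  · calc (2 * K) ^ 2 = 4 * (K * K) := by ring
      _ ≤ N := by linarith
  · calc (2 * K + 1) ^ 2 = 4 * (K * K) + 4 * K + 1 := by ring
      _ ≤ N := by linarith

/-- Lower bound example: `P` is a path on `2m+1` vertices labeled, in order,
`i m, i (m-1), …, i 1, d m, d 1, d 2, …, d m` (the universe `{1, …, m}` is modeled as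
`Fin m`, with `j : Fin m` standing for the element `j + 1`), `v` is the middle vertex,
and `Y` is the set of elements `2k+1` for `k = 0, …, ⌊m/2⌋ - 1`. Every directed walk
in `dec(P)` from `(v, ∅)` to `(v, Y)` has at least `(m-2)^2` edges. -/
theorem stmt_9 (m : ℕ) (hm : 3 ≤ m)
    (P : SimpleGraph (Fin (2 * m + 1)))
    (hP : ∀ a b : Fin (2 * m + 1), P.Adj a b ↔ (a.val + 1 = b.val ∨ b.val + 1 = a.val))
    (ins : Fin (2 * m + 1) → Bool) (hins : ∀ a, ins a = decide (a.val < m))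
    (elt : Fin (2 * m + 1) → Fin m)
    (helt : ∀ a, (elt a).val =
      if a.val < m then m - 1 - a.val else if a.val = m then m - 1 else a.val - m - 1)
    (v : Fin (2 * m + 1)) (hv : v.val = m)
    (Y : Set (Fin m)) (hY : ∀ x : Fin m, x ∈ Y ↔ (x.val % 2 = 0 ∧ x.val < m - 1))
    (L : List (Fin (2 * m + 1) × Set (Fin m)))
    (hchain : L.Chain' (decAdj P ins elt))
    (hhead : L.head? = some (v, (∅ : Set (Fin m))))
    (hlast : L.getLast? = some (v, Y)) :
    (m - 2) ^ 2 + 1 ≤ L.length := by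
  classical
  have hL : L ≠ [] := by rintro rfl; simp at hhead
  have hn : 0 < L.length := List.length_pos_iff.mpr hL
  set N := L.length - 1 with hNdef
  set F : ℕ → Fin (2 * m + 1) × Set (Fin m) := fun i => L.getD i (v, ∅) with hF
  set f : ℕ → ℕ := fun i => ((F i).1 : ℕ) with hf
  set S : ℕ → Set (Fin m) := fun i => (F i).2 with hS
  -- endpoints
  have hF0 : F 0 = (v, ∅) := by
    have h2 : L[0]? = some L[0] := List.getElem?_eq_getElem hn
    have h1 : some L[0] = some (v, ∅) := by rw [← h2, ← List.head?_eq_getElem?]; exact hhead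
    have h4 : L[0] = (v, ∅) := Option.some.inj h1
    show L.getD 0 (v, ∅) = (v, ∅)
    rw [List.getD_eq_getElem L (v, ∅) hn]; exact h4
  have hNlt : N < L.length := by omega
  have hFN : F N = (v, Y) := by
    have h2 : L[N]? = some L[N] := List.getElem?_eq_getElem hNlt
    have h1 : some L[N] = some (v, Y) := by
      rw [← h2, hNdef, ← List.getLast?_eq_getElem?]; exact hlast
    have h4 : L[N] = (v, Y) := Option.some.inj h1
    show L.getD N (v, ∅) = (v, Y)
    rw [List.getD_eq_getElem L (v, ∅) hNlt]; exact h4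
  -- chain step
  have hstepFull : ∀ i, i < N → decAdj P ins elt (F i) (F (i + 1)) := by
    intro i hi
    have h1 : i < L.length - 1 := by omega
    have h2 := List.isChain_iff_getElem.mp hchain i (by omega)
    have hi1 : i < L.length := by omega
    have hi2 : i + 1 < L.length := by omega
    have e1 : F i = L.get ⟨i, hi1⟩ := by
      show L.getD i (v, ∅) = _
      rw [List.getD_eq_getElem L (v, ∅) hi1]; rfl
    have e2 : F (i + 1) = L.get ⟨i + 1, hi2⟩ := by
      show L.getD (i + 1) (v, ∅) = _
      rw [List.getD_eq_getElem L (v, ∅) hi2]; rfl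
    rw [e1, e2]; exact h2
  have hstepf : ∀ i, i < N → (f (i + 1) = f i + 1 ∨ f i = f (i + 1) + 1) := by
    intro i hi
    have := (hstepFull i hi).1
    rw [hP] at this
    rcases this with h | h
    · left; exact h.symm
    · right; exact h.symm
  have hSstep : ∀ i, i < N → S (i + 1) =
      if ins ((F (i + 1)).1) = true then S i ∪ {elt ((F (i + 1)).1)}
      else S i \ {elt ((F (i + 1)).1)} := by
    intro i hi
    have := (hstepFull i hi).2
    rw [hS]
    exact this
  -- set characterization
  have hS0 : S 0 = ∅ := by rw [hS]; show (F 0).2 = ∅; rw [hF0]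
  have hmemN := final_char (fun i => ins ((F i).1)) (fun i => elt ((F i).1)) S hS0 N hSstep
  have hSN : S N = Y := by show (F N).2 = Y; rw [hFN]
  have hf0 : f 0 = m := by show ((F 0).1 : ℕ) = m; rw [hF0]; exact hv
  have hfN : f N = m := by show ((F N).1 : ℕ) = m; rw [hFN]; exact hv
  -- label characterizations
  have echar : ∀ (u : Fin (2 * m + 1)) (x : Fin m),
      (elt u = x ∧ ins u = true) ↔ (u : ℕ) = m - 1 - (x : ℕ) := by
    intro u x
    have h1 := helt u
    have h2 := hins u
    have hu := u.isLt
    have hx := x.isLt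
    constructor
    · rintro ⟨he, hi⟩
      rw [h2, decide_eq_true_eq] at hi
      rw [if_pos hi] at h1
      have h3 : ((elt u : Fin m) : ℕ) = (x : ℕ) := by rw [he]
      omega
    · intro h
      have hum : (u : ℕ) < m := by omega
      rw [if_pos hum] at h1
      exact ⟨Fin.ext (by omega), by rw [h2, decide_eq_true_eq]; exact hum⟩
  have dchar : ∀ (u : Fin (2 * m + 1)) (x : Fin m),
      (elt u = x ∧ ins u = false) ↔
      ((u : ℕ) = m + 1 + (x : ℕ) ∨ ((u : ℕ) = m ∧ (x : ℕ) = m - 1)) := by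
    intro u x
    have h1 := helt u
    have h2 := hins u
    have hu := u.isLt
    have hx := x.isLt
    constructor
    · rintro ⟨he, hi⟩
      rw [h2, decide_eq_false_iff_not] at hi
      rw [if_neg hi] at h1
      have h3 : ((elt u : Fin m) : ℕ) = (x : ℕ) := by rw [he]
      by_cases hm' : (u : ℕ) = m
      · rw [if_pos hm'] at h1; right; omega
      · rw [if_neg hm'] at h1; left; omega
    · intro h
      have hum : ¬ (u : ℕ) < m := by omega
      rw [if_neg hum] at h1
      have hif : ins u = false := by rw [h2, decide_eq_false_iff_not]; exact hum
      rcases h with h | h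
      · have hm' : (u : ℕ) ≠ m := by omega
        rw [if_neg hm'] at h1
        exact ⟨Fin.ext (by omega), hif⟩
      · rw [if_pos h.1] at h1
        exact ⟨Fin.ext (by omega), hif⟩
  -- hypotheses for key_bound
  have hinsK : ∀ c, c < m - 1 → c % 2 = 0 → ∃ i, 1 ≤ i ∧ i ≤ N ∧ f i = m - 1 - c ∧
      ∀ j, i < j → j ≤ N → f j ≠ m - 1 - c ∧ f j ≠ m + 1 + c := by
    intro c hc he
    have hcm : c < m := by omega
    have hxY : (⟨c, hcm⟩ : Fin m) ∈ Y := (hY ⟨c, hcm⟩).2 ⟨he, hc⟩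
    rw [← hSN, hmemN ⟨c, hcm⟩] at hxY
    obtain ⟨i, h1, h2, h3, h4, h5⟩ := hxY
    have hfi : f i = m - 1 - c := (echar ((F i).1) ⟨c, hcm⟩).1 ⟨h3, h4⟩
    refine ⟨i, h1, h2, hfi, fun j hj hj' => ⟨?_, ?_⟩⟩
    · intro hfj
      exact h5 j hj hj' ((echar ((F j).1) ⟨c, hcm⟩).2 hfj).1
    · intro hfj
      exact h5 j hj hj' ((dchar ((F j).1) ⟨c, hcm⟩).2 (Or.inl hfj)).1
  have hdelK : ∀ c, c < m - 1 → c % 2 = 1 → ∀ i, 1 ≤ i → i ≤ N → f i = m - 1 - c →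
      ∃ j, i < j ∧ j ≤ N ∧ (f j = m - 1 - c ∨ f j = m + 1 + c) := by
    intro c hc ho i h1 h2 hfi
    have hcm : c < m := by omega
    have hxY : (⟨c, hcm⟩ : Fin m) ∉ Y := by
      intro h
      have := (hY ⟨c, hcm⟩).1 h
      simp at this
      omega
    by_contra hno
    push_neg at hno
    apply hxY
    rw [← hSN, hmemN ⟨c, hcm⟩]
    have hei := (echar ((F i).1) ⟨c, hcm⟩).2 hfi
    refine ⟨i, h1, h2, hei.1, hei.2, fun j hj hj' hej => ?_⟩
    rcases Bool.eq_false_or_eq_true (ins ((F j).1)) with hb | hb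
    · have := (echar ((F j).1) ⟨c, hcm⟩).1 ⟨hej, hb⟩
      exact (hno j hj hj').1 this
    · have := (dchar ((F j).1) ⟨c, hcm⟩).1 ⟨hej, hb⟩
      rcases this with h | h
      · exact (hno j hj hj').2 h
      · have h2' : (⟨c, hcm⟩ : Fin m).val = m - 1 := h.2
        simp at h2'
        omega
  have hkey := key_bound m N hm f hstepf hf0 hfN hinsK hdelK
  have hN1 : N + 1 = L.length := by omega
  calc (m - 2) ^ 2 + 1 ≤ N + 1 := Nat.add_le_add_right hkey 1
    _ = L.length := hN1
end

section
/- Let G be an undirected graph with vertex set {1, ..., n}, n ≥ 1. Construct the event graph G' as follows: take two disjoint copies G1 and G2 of G, label the copy of node i in G1 with 'i i' and the copy of node i in G2 with 'd i'; add two new nodes v1 labeled 'i (n+1)' and v2 labeled 'd (n+1)'; make v1 adjacent to v2 and to every node of G1 and of G2. Then G has a Hamiltonian path if and only if the node (v1, {1, 2, ..., n+1}) of dec(G') admits a certifying walk consisting of at most n+2 nodes (counted with repetition). -/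
/-- The vertex set of the event graph `G'` built from a graph on `Fin n`:
a copy `G1` of the vertices (first summand), a copy `G2` (second summand), and two
extra vertices `v1 = Sum.inr true` and `v2 = Sum.inr false`. -/
abbrev HamV (n : ℕ) := (Fin n ⊕ Fin n) ⊕ Bool

/-- Within each copy the edges of `G` are kept, and `v1` is adjacent to `v2`
and to every vertex of both copies. -/
def hamRel (n : ℕ) (G : SimpleGraph (Fin n)) : HamV n → HamV n → Prop := fun a b =>
  (∃ i j : Fin n, a = Sum.inl (Sum.inl i) ∧ b = Sum.inl (Sum.inl j) ∧ G.Adj i j) ∨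
  (∃ i j : Fin n, a = Sum.inl (Sum.inr i) ∧ b = Sum.inl (Sum.inr j) ∧ G.Adj i j) ∨
  (a = Sum.inr true ∧ b ≠ Sum.inr true)

/-- The event graph `G'` of the Hamiltonian-path reduction. -/
def hamGraph (n : ℕ) (G : SimpleGraph (Fin n)) : SimpleGraph (HamV n) :=
  SimpleGraph.fromRel (hamRel n G)

/-- Copies in `G1` are insertion nodes, copies in `G2` are deletion nodes,
`v1` is an insertion node and `v2` a deletion node. -/
def hamIns (n : ℕ) : HamV n → Bool
  | Sum.inl (Sum.inl _) => true
  | Sum.inl (Sum.inr _) => false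
  | Sum.inr b => b

/-- The element labels: the universe `{1, …, n+1}` is modeled as `Fin (n+1)`, with
`j : Fin (n+1)` standing for the element `j + 1`. The two copies of node `i` refer to
element `i + 1`, while `v1` and `v2` refer to element `n + 1`. -/
def hamElt (n : ℕ) : HamV n → Fin (n + 1)
  | Sum.inl (Sum.inl i) => i.castSucc
  | Sum.inl (Sum.inr i) => i.castSucc
  | Sum.inr _ => Fin.last n


lemma ham_adj_v1 {n : ℕ} {G : SimpleGraph (Fin n)} {x : HamV n}
    (hx : x ≠ Sum.inr true) : (hamGraph n G).Adj (Sum.inr true) x := by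
  rw [hamGraph, SimpleGraph.fromRel_adj]
  exact ⟨fun h => hx h.symm, Or.inl (Or.inr (Or.inr ⟨rfl, hx⟩))⟩

lemma ham_adj_copy {n : ℕ} {G : SimpleGraph (Fin n)} {i j : Fin n} (h : G.Adj i j) :
    (hamGraph n G).Adj (Sum.inl (Sum.inl i)) (Sum.inl (Sum.inl j)) := by
  rw [hamGraph, SimpleGraph.fromRel_adj]
  refine ⟨by simpa using h.ne, Or.inl (Or.inl ⟨i, j, rfl, rfl, h⟩)⟩

lemma ham_adj_copy_rev {n : ℕ} {G : SimpleGraph (Fin n)} {i j : Fin n}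
    (h : (hamGraph n G).Adj (Sum.inl (Sum.inl i)) (Sum.inl (Sum.inl j))) : G.Adj i j := by
  rw [hamGraph, SimpleGraph.fromRel_adj] at h
  rcases h.2 with (⟨a,b,ha,hb,hab⟩|⟨a,b,ha,hb,hab⟩|⟨ha,hb⟩) | (⟨a,b,ha,hb,hab⟩|⟨a,b,ha,hb,hab⟩|⟨ha,hb⟩) <;>
    simp_all
  all_goals exact hab.symm

lemma walk_chain {n : ℕ} {G : SimpleGraph (Fin n)} (a : Fin n) (L : List (Fin n))
    (h : List.Chain G.Adj a L) :
    List.Chain' (hamGraph n G).Adj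
      ((Sum.inr true :: (a :: L).map (Sum.inl ∘ Sum.inl)) ++ [Sum.inr true]) := by
  induction L generalizing a with
  | nil =>
      simp only [List.map, List.cons_append, List.nil_append, List.Chain', List.isChain_cons_cons,
        List.isChain_singleton, and_true]
      exact ⟨ham_adj_v1 (by simp), (ham_adj_v1 (by simp)).symm⟩
  | cons b L ih =>
      replace h := List.isChain_cons_cons.mp h
      have := ih b h.2
      simp only [List.map, List.cons_append, List.Chain', List.isChain_cons_cons] at this ⊢
      exact ⟨ham_adj_v1 (by simp), ham_adj_copy h.1, this.2⟩

/-- `G` has a Hamiltonian path iff the node `(v1, {1, …, n+1})` of `dec(G')` admits a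
certifying walk with at most `n + 2` nodes (counted with repetition). -/
theorem stmt_11 (n : ℕ) (hn : 1 ≤ n) (G : SimpleGraph (Fin n)) :
    (∃ L : List (Fin n), L.Chain' G.Adj ∧ L.Nodup ∧ ∀ i : Fin n, i ∈ L) ↔
    (∃ W : List (HamV n),
      IsCertifyingWalk (hamGraph n G) (hamIns n) (hamElt n)
        (Sum.inr true) (Set.univ : Set (Fin (n + 1))) W ∧
      W.length ≤ n + 2) := by
  constructor
  · rintro ⟨L, hC, hNd, hAll⟩
    have hLne : L ≠ [] := by
      intro h; exact absurd (hAll ⟨0, hn⟩) (by simp [h])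
    set f : Fin n → HamV n := Sum.inl ∘ Sum.inl with hf
    refine ⟨(Sum.inr true :: L.map f) ++ [Sum.inr true], ⟨by simp, ?_, by simp,
      List.getLast?_concat, ?_⟩, ?_⟩
    · obtain ⟨a, L', rfl⟩ := List.exists_cons_of_ne_nil hLne
      exact walk_chain a L' hC
    · intro x
      refine Fin.lastCases ?_ ?_ x
      · exact ⟨Sum.inr true :: L.map f, Sum.inr true, [], by simp, rfl, by simp,
          by simp [hamIns]⟩
      · intro i
        obtain ⟨L₁, L₂, hsplit⟩ := List.append_of_mem (hAll i)
        have hnotmem : i ∉ L₂ := by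
          rw [hsplit] at hNd
          exact (List.nodup_middle.mp hNd).notMem ∘ (List.mem_append_right L₁)
        refine ⟨Sum.inr true :: L₁.map f, f i, L₂.map f ++ [Sum.inr true],
          by simp [hsplit], rfl, ?_, by simp [hamIns, hf]⟩
        intro u hu
        rcases List.mem_append.mp hu with hu | hu
        · obtain ⟨j, hj, rfl⟩ := List.mem_map.mp hu
          simp only [hf, Function.comp_apply, hamElt]
          exact fun h => hnotmem (Fin.castSucc_injective n h ▸ hj)
        · rw [List.mem_singleton.mp hu]
          exact (Fin.castSucc_lt_last i).ne'
    · have : L.length ≤ n := by simpa using hNd.length_le_card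
      simp only [List.length_append, List.length_cons, List.length_map, List.length_nil]
      omega
  · rintro ⟨W, ⟨hne, hchain, hhead, hlast, hcert⟩, hlen⟩
    set g : Fin n → HamV n := Sum.inl ∘ Sum.inl with hg
    have hginj : Function.Injective g := fun a b h => by simpa [hg] using h
    have hmemW : ∀ i : Fin n, g i ∈ W := by
      intro i
      obtain ⟨W₁, w, W₂, hWeq, helt, -, hiff⟩ := hcert i.castSucc
      have hins : hamIns n w = true := hiff.mp (Set.mem_univ _)
      have hw : w = g i := by
        match w with
        | Sum.inl (Sum.inl j) =>
            have : j = i := Fin.castSucc_injective n helt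
            rw [this]; rfl
        | Sum.inl (Sum.inr j) => simp [hamIns] at hins
        | Sum.inr b =>
            exact absurd helt (by simpa [hamElt] using (Fin.castSucc_lt_last i).ne')
      rw [hWeq, hw]
      exact List.mem_append_right _ List.mem_cons_self
    obtain ⟨a, T, rfl⟩ := List.exists_cons_of_ne_nil hne
    have ha : a = Sum.inr true := by simpa using hhead
    subst ha
    have hTne : T ≠ [] := by
      rintro rfl
      have := hmemW ⟨0, hn⟩
      simp [hg] at this
    rcases List.eq_nil_or_concat T with rfl | ⟨M, z, rfl⟩
    · exact absurd rfl hTne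
    have hz : z = Sum.inr true := by
      rw [List.concat_eq_append, ← List.cons_append, List.getLast?_concat] at hlast
      simpa using hlast
    subst hz
    simp only [List.concat_eq_append] at hchain hmemW hlen
    have hmemM : ∀ i : Fin n, g i ∈ M := by
      intro i
      have := hmemW i
      simpa [hg] using this
    have hsub : (Finset.univ.image g) ⊆ M.toFinset := by
      intro u hu
      obtain ⟨i, -, rfl⟩ := Finset.mem_image.mp hu
      exact List.mem_toFinset.mpr (hmemM i)
    have hcardim : (Finset.univ.image g).card = n := by
      rw [Finset.card_image_of_injective _ hginj, Finset.card_univ, Fintype.card_fin]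
    have h1 : n ≤ M.toFinset.card := by
      have := Finset.card_le_card hsub
      omega
    have h2 : M.toFinset.card ≤ M.length := by
      rw [List.card_toFinset]; exact M.dedup_sublist.length_le
    have hlen' : M.length + 2 ≤ n + 2 := by simpa using hlen
    have hMlen : M.length = n := by omega
    have hdedup : M.dedup.length = M.length := by
      have := M.dedup_sublist.length_le
      have h3 : n ≤ M.dedup.length := by rw [← List.card_toFinset]; exact h1
      omega
    have hMnd : M.Nodup := List.dedup_eq_self.mp (M.dedup_sublist.eq_of_length hdedup)
    have hfin : M.toFinset = Finset.univ.image g :=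
      (Finset.eq_of_subset_of_card_le hsub (by omega)).symm
    have hform : ∀ u ∈ M, ∃ i, u = g i := by
      intro u hu
      have : u ∈ Finset.univ.image g := hfin ▸ List.mem_toFinset.mpr hu
      obtain ⟨i, -, rfl⟩ := Finset.mem_image.mp this
      exact ⟨i, rfl⟩
    set fb : HamV n → Fin n := fun v => match v with
      | Sum.inl (Sum.inl i) => i
      | _ => ⟨0, hn⟩ with hfb
    set L : List (Fin n) := M.map fb with hL
    have hML : M = L.map g := by
      rw [hL, List.map_map]
      have : ∀ u ∈ M, u = (g ∘ fb) u := by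
        intro u hu
        obtain ⟨i, rfl⟩ := hform u hu
        rfl
      exact (List.map_id M).symm.trans (List.map_congr_left fun a haa => this a haa)
    refine ⟨L, ?_, ?_, ?_⟩
    · have hMchain : M.Chain' (hamGraph n G).Adj :=
        hchain.infix ⟨[Sum.inr true], [Sum.inr true], by simp⟩
      rw [hML] at hMchain; replace hMchain := (List.isChain_map g).mp hMchain
      exact hMchain.imp fun a b h => ham_adj_copy_rev h
    · exact List.Nodup.of_map g (by rw [← hML]; exact hMnd)
    · intro i
      have := hmemM i
      rw [hML, List.mem_map] at this
      obtain ⟨j, hj, hji⟩ := this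
      exact (hginj hji) ▸ hj
end
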